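/- arXiv:0709.1370 — 14 statements merged into one kernel-verified Lean document; each statement's English description precedes it below -/
import Mathlib

section
/- Let K be a field with algebraic closure K̄, let g and h be monic irreducible polynomials over K of degrees n ≥ 1 and m ≥ 1 respectively, and fix a root α ∈ K̄ of g. Then for every integer d with 1 ≤ d ≤ n, the set of monic polynomials f ∈ K[x] of degree d such that the minimal polynomial of f(α) over K equals h is finite of cardinality at most m. -/
open Polynomial

/-- Proposition 2.1 (finiteness of the wedge spectrum): for monic irreducible `g`, `h`
of degrees `n, m ≥ 1`, a fixed root `α` of `g` in the algebraic closure, and any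
`1 ≤ d ≤ n`, there are at most `m` monic polynomials `f` of degree `d` with
`minpoly K (f(α)) = h`, i.e. with `f ▷ g = h`. -/
theorem wedge_fibre_finite (K : Type*) [Field K] (g h : K[X])
    (hg_monic : g.Monic) (hg_irr : Irreducible g)
    (hh_monic : h.Monic) (hh_irr : Irreducible h)
    (n m : ℕ) (hn : g.natDegree = n) (hm : h.natDegree = m)
    (hn1 : 1 ≤ n) (hm1 : 1 ≤ m)
    (α : AlgebraicClosure K) (hα : Polynomial.aeval α g = 0)
    (d : ℕ) (hd1 : 1 ≤ d) (hdn : d ≤ n) :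
    {f : K[X] | f.Monic ∧ f.natDegree = d ∧
        minpoly K (Polynomial.aeval α f) = h}.Finite ∧
    {f : K[X] | f.Monic ∧ f.natDegree = d ∧
        minpoly K (Polynomial.aeval α f) = h}.ncard ≤ m := by
  classical
  set S := {f : K[X] | f.Monic ∧ f.natDegree = d ∧
      minpoly K (Polynomial.aeval α f) = h} with hS
  have hgmin : minpoly K α = g :=
    (minpoly.eq_of_irreducible_of_monic hg_irr hα hg_monic).symm
  -- injectivity of evaluation at α on S
  have hinj : Set.InjOn (fun f : K[X] => Polynomial.aeval α f) S := by
    rintro f₁ ⟨h1m, h1d, -⟩ f₂ ⟨h2m, h2d, -⟩ hfe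
    by_contra hne
    have hsub : f₁ - f₂ ≠ 0 := sub_ne_zero.mpr hne
    have hdvd : g ∣ f₁ - f₂ := by
      rw [← hgmin]
      exact minpoly.dvd K α (by simpa [map_sub, sub_eq_zero] using hfe)
    have hdegeq : f₁.degree = f₂.degree := by
      rw [Polynomial.degree_eq_natDegree h1m.ne_zero,
        Polynomial.degree_eq_natDegree h2m.ne_zero, h1d, h2d]
    have hdeg : (f₁ - f₂).degree < f₁.degree :=
      Polynomial.degree_sub_lt hdegeq h1m.ne_zero (by rw [h1m.leadingCoeff, h2m.leadingCoeff])
    have hlt : (f₁ - f₂).natDegree < d := by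
      have := Polynomial.natDegree_lt_natDegree hsub hdeg
      omega
    have hle : g.natDegree ≤ (f₁ - f₂).natDegree :=
      Polynomial.natDegree_le_of_dvd hdvd hsub
    omega
  -- values lie among roots of h in L
  have hmaps : Set.MapsTo (fun f : K[X] => Polynomial.aeval α f) S
      ((h.map (algebraMap K (AlgebraicClosure K))).roots.toFinset : Set (AlgebraicClosure K)) := by
    rintro f ⟨-, -, hfmin⟩
    have hroot : Polynomial.aeval (Polynomial.aeval α f) h = 0 := by
      rw [← hfmin]; exact minpoly.aeval K _
    have hmapne : h.map (algebraMap K (AlgebraicClosure K)) ≠ 0 := (hh_monic.map _).ne_zero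
    simp only [Finset.coe_sort_coe, Multiset.mem_toFinset, Finset.mem_coe]
    rw [Polynomial.mem_roots hmapne]
    rwa [Polynomial.IsRoot, Polynomial.eval_map, ← Polynomial.aeval_def]
  have himg : ((fun f : K[X] => Polynomial.aeval α f) '' S).Finite :=
    ((h.map (algebraMap K (AlgebraicClosure K))).roots.toFinset.finite_toSet).subset hmaps.image_subset
  have hfin : S.Finite := Set.Finite.of_finite_image himg hinj
  refine ⟨hfin, ?_⟩
  have h1 : S.ncard = ((fun f : K[X] => Polynomial.aeval α f) '' S).ncard :=
    (Set.ncard_image_of_injOn hinj).symm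
  have h2 : ((fun f : K[X] => Polynomial.aeval α f) '' S).ncard ≤
      ((h.map (algebraMap K (AlgebraicClosure K))).roots.toFinset : Set (AlgebraicClosure K)).ncard :=
    Set.ncard_le_ncard hmaps.image_subset
      ((h.map (algebraMap K (AlgebraicClosure K))).roots.toFinset.finite_toSet)
  have h3 : ((h.map (algebraMap K (AlgebraicClosure K))).roots.toFinset : Set (AlgebraicClosure K)).ncard ≤ m := by
    rw [Set.ncard_coe_finset]
    calc (h.map (algebraMap K (AlgebraicClosure K))).roots.toFinset.card
        ≤ Multiset.card (h.map (algebraMap K (AlgebraicClosure K))).roots := Multiset.toFinset_card_le _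
      _ ≤ (h.map (algebraMap K (AlgebraicClosure K))).natDegree := Polynomial.card_roots' _
      _ = m := by rw [Polynomial.natDegree_map, hm]
  omega
end

section
/- Let K be a field with algebraic closure K̄, let g ∈ K[x] be monic, irreducible, separable and nonconstant, and let R ⊆ K̄ be the (finite) set of roots of g. Let f ∈ K[x] and suppose that g(f(α)) = 0 for some root α ∈ R. Then the evaluation map x ↦ f(x) maps R bijectively onto itself; in particular every root of g is a periodic point of f. -/
/-!
Evaluation at `f ∈ K[X]` commutes with every `K`-automorphism of `K̄`, and these act
transitively on the roots of the irreducible `g`. Conjugating `α ↦ f(α)` therefore shows that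
`f` sends every root of `g` to a root, and conjugating `f(α)` to an arbitrary root `β` exhibits
a preimage of `β`. A surjective self-map of the finite set `R` is bijective, and every point of
a finite set permuted by a map is periodic.
-/

open Polynomial Function Set

theorem Set.InjOn.subset_periodicPts {α : Type*} {f : α → α} {s : Set α} (hf : InjOn f s)
    (hmaps : MapsTo f s s) (hs : s.Finite) : s ⊆ periodicPts f := by
  intro x hx
  have : Finite s := hs
  have hsemiconj : Semiconj Subtype.val (hmaps.restrict f s s) f := hmaps.val_restrict_apply
  exact hsemiconj.mapsTo_periodicPts <| (hmaps.restrict_inj.mpr hf).mem_periodicPts ⟨x, hx⟩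

namespace Polynomial

variable {K L : Type*} [Field K] [Field L] [Algebra K L] [Normal K L] {g : K[X]}

theorem exists_algEquiv_apply_eq_of_mem_rootSet (hg : Irreducible g) {x y : L}
    (hx : x ∈ g.rootSet L) (hy : y ∈ g.rootSet L) : ∃ σ : L ≃ₐ[K] L, σ x = y := by
  refine minpoly.exists_algEquiv_of_root (Algebra.IsAlgebraic.isAlgebraic y) ?_
  rw [← minpoly.eq_of_irreducible hg (aeval_eq_zero_of_mem_rootSet hy), aeval_mul,
    aeval_eq_zero_of_mem_rootSet hx, zero_mul]

theorem algEquiv_mem_rootSet {x : L} (σ : L ≃ₐ[K] L) (hx : x ∈ g.rootSet L) :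
    σ x ∈ g.rootSet L :=
  rootSet_mapsTo (σ : L →ₐ[K] L) hx

theorem aeval_mem_rootSet_of_mem_rootSet (hg : Irreducible g) (f : K[X]) {x y : L}
    (hx : x ∈ g.rootSet L) (hy : y ∈ g.rootSet L) (hfx : aeval x f ∈ g.rootSet L) :
    aeval y f ∈ g.rootSet L := by
  obtain ⟨σ, rfl⟩ := exists_algEquiv_apply_eq_of_mem_rootSet hg hx hy
  rw [aeval_algHom_apply]
  exact algEquiv_mem_rootSet σ hfx

theorem bijOn_aeval_rootSet (hg : Irreducible g) (f : K[X]) {x : L} (hx : x ∈ g.rootSet L)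
    (hfx : aeval x f ∈ g.rootSet L) :
    BijOn (fun y => aeval y f) (g.rootSet L) (g.rootSet L) := by
  have hmaps : MapsTo (fun y => aeval y f) (g.rootSet L) (g.rootSet L) :=
    fun y hy => aeval_mem_rootSet_of_mem_rootSet hg f hx hy hfx
  refine ((rootSet_finite g L).surjOn_iff_bijOn_of_mapsTo hmaps).mp fun y hy => ?_
  obtain ⟨σ, hσ⟩ := exists_algEquiv_apply_eq_of_mem_rootSet hg hfx hy
  exact ⟨σ x, algEquiv_mem_rootSet σ hx, by simp only [aeval_algHom_apply, hσ]⟩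

end Polynomial

theorem rightInvariant_roots_periodic_general (K : Type*) [Field K] (f g : K[X])
    (hg_irr : Irreducible g)
    (R : Set (AlgebraicClosure K)) (hR : R = {x | Polynomial.aeval x g = 0})
    (α : AlgebraicClosure K) (hα : α ∈ R)
    (hfα : Polynomial.aeval (Polynomial.aeval α f) g = 0) :
    Set.BijOn (fun x => Polynomial.aeval x f) R R ∧
    ∀ β ∈ R, ∃ t : ℕ, 1 ≤ t ∧ (fun x => Polynomial.aeval x f)^[t] β = β := by
  have hR_rootSet : R = g.rootSet (AlgebraicClosure K) := by
    ext x
    rw [hR, mem_rootSet_of_ne hg_irr.ne_zero, mem_ofPred_eq]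
  subst hR_rootSet
  have hbij := bijOn_aeval_rootSet hg_irr f hα ((mem_rootSet_of_ne hg_irr.ne_zero).mpr hfα)
  refine ⟨hbij, fun β hβ => ?_⟩
  obtain ⟨t, ht, hβt⟩ := hbij.injOn.subset_periodicPts hbij.mapsTo (rootSet_finite _ _) hβ
  exact ⟨t, ht, hβt⟩

/-- Right invariants come from periodic points: if `g` is monic, irreducible, separable
and nonconstant with root set `R` in the algebraic closure, and `f` maps some root of `g`
to a root of `g` (i.e. `f ▷ g = g`), then `x ↦ f(x)` permutes `R` (maps `R` bijectively
onto itself); in particular every root of `g` is a periodic point of `f`. -/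
theorem rightInvariant_roots_periodic (K : Type*) [Field K] (f g : K[X])
    (hg_monic : g.Monic) (hg_irr : Irreducible g) (hg_deg : 0 < g.natDegree)
    (hg_sep : g.Separable)
    (R : Set (AlgebraicClosure K)) (hR : R = {x | Polynomial.aeval x g = 0})
    (α : AlgebraicClosure K) (hα : α ∈ R)
    (hfα : Polynomial.aeval (Polynomial.aeval α f) g = 0) :
    Set.BijOn (fun x => Polynomial.aeval x f) R R ∧
    ∀ β ∈ R, ∃ t : ℕ, 1 ≤ t ∧ (fun x => Polynomial.aeval x f)^[t] β = β :=
  rightInvariant_roots_periodic_general K f g hg_irr R hR α hα hfα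
end

section
/- Let K be a field with char K ≠ 2 and algebraic closure K̄, and let f ∈ K[x] be monic and nonconstant. Define g(x) = f(x²) and h(x) = g(x) − x, and assume g and h are both irreducible over K. Then: (1) for every root α ∈ K̄ of h, the minimal polynomial over K of g(α) equals h; and (2) for every root β ∈ K̄ of g, the minimal polynomial over K of h(β) equals g. In other words, g ▷ h = h and h ▷ g = g, so {g, h} is a stable 2-set of type I. -/
/-! A root `α` of `h` satisfies `g(α) = α`, and a root `β` of `g` satisfies `h(β) = -β`, which is
again a root of the even polynomial `g`. So in both cases the value is a root of the monic
irreducible polynomial in question, which is therefore its minimal polynomial. -/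

open Polynomial

theorem Polynomial.Monic.sub_X {R : Type*} [Ring R] [Nontrivial R] {p : R[X]} (hp : p.Monic)
    (hdeg : 1 < p.natDegree) : (p - X).Monic :=
  hp.sub_of_left <| degree_X_le.trans_lt <| by
    rw [degree_eq_natDegree hp.ne_zero]
    exact_mod_cast hdeg

theorem Polynomial.aeval_neg_comp_X_sq {R A : Type*} [CommSemiring R] [CommRing A] [Algebra R A]
    (f : R[X]) (a : A) : aeval (-a) (f.comp (X ^ 2)) = aeval a (f.comp (X ^ 2)) := by
  simp [aeval_comp]

theorem typeI_stable_pair_general (K : Type*) [Field K]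
    (f : K[X]) (hf_monic : f.Monic) (hf_deg : 0 < f.natDegree)
    (g h : K[X]) (hg : g = f.comp (X ^ 2)) (hh : h = g - X)
    (hg_irr : Irreducible g) (hh_irr : Irreducible h) :
    (∀ α : AlgebraicClosure K, Polynomial.aeval α h = 0 →
      minpoly K (Polynomial.aeval α g) = h) ∧
    (∀ β : AlgebraicClosure K, Polynomial.aeval β g = 0 →
      minpoly K (Polynomial.aeval β h) = g) := by
  have hg_monic : g.Monic := hg ▸ hf_monic.comp (monic_X_pow 2) (by simp)
  have hh_monic : h.Monic := hh ▸ hg_monic.sub_X (by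
    rw [hg, natDegree_comp, natDegree_X_pow]
    omega)
  refine ⟨fun α hα => ?_, fun β hβ => ?_⟩
  · have hgα : aeval α g = α := by rwa [hh, map_sub, aeval_X, sub_eq_zero] at hα
    rw [hgα]
    exact (minpoly.eq_of_irreducible_of_monic hh_irr hα hh_monic).symm
  · have hhβ : aeval β h = -β := by rw [hh, map_sub, aeval_X, hβ, zero_sub]
    have hg_neg : aeval (-β) g = 0 := by rwa [hg, aeval_neg_comp_X_sq, ← hg]
    rw [hhβ]
    exact (minpoly.eq_of_irreducible_of_monic hg_irr hg_neg hg_monic).symm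

/-- The family of type I stable 2-sets (equation (13) of the paper): for `char K ≠ 2`
and monic nonconstant `f`, put `g(x) = f(x²)` and `h(x) = g(x) - x`.  If `g` and `h`
are irreducible, then `g ▷ h = h` and `h ▷ g = g`: for every root `α` of `h`,
`minpoly K (g(α)) = h`, and for every root `β` of `g`, `minpoly K (h(β)) = g`.
Hence `{g, h}` is a stable 2-set of type I. -/
theorem typeI_stable_pair (K : Type*) [Field K] (hchar : ringChar K ≠ 2)
    (f : K[X]) (hf_monic : f.Monic) (hf_deg : 0 < f.natDegree)
    (g h : K[X]) (hg : g = f.comp (X ^ 2)) (hh : h = g - X)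
    (hg_irr : Irreducible g) (hh_irr : Irreducible h) :
    (∀ α : AlgebraicClosure K, Polynomial.aeval α h = 0 →
      minpoly K (Polynomial.aeval α g) = h) ∧
    (∀ β : AlgebraicClosure K, Polynomial.aeval β g = 0 →
      minpoly K (Polynomial.aeval β h) = g) :=
  typeI_stable_pair_general K f hf_monic hf_deg g h hg hh hg_irr hh_irr
end

section
/- Let K be a field with algebraic closure K̄, let f, g ∈ K[x] be monic with g irreducible and nonconstant, let n = deg f ≥ 1, and let a, b ∈ K with a ≠ 0. Define σ_{a,b}(f)(x) = a^{−n} f(ax + b) and σ_{a,b}(g)(x) = a^{−deg g} g(ax + b). Then for every root α ∈ K̄ of g, the element (α − b)/a is a root of σ_{a,b}(g), and the minimal polynomial over K of σ_{a,b}(f)((α − b)/a) equals σ_{a^n,0}(w), where w is the minimal polynomial over K of f(α) and σ_{a^n,0}(w)(x) = a^{−n·deg w} w(a^n x). Equivalently, σ_{a,b}(f) ▷ σ_{a,b}(g) = σ_{a^n,0}(f ▷ g). -/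
/-!
Substituting `β = (α - b)/a` into `σ_{a,b}(p)` gives `a^{-deg p} • p(α)`: this makes `β` a root
of `σ_{a,b}(g)` and turns `σ_{a,b}(f)(β)` into `(a^n)⁻¹ • f(α)`. Since `σ_{c,0}` is `scaleRoots`
by `c⁻¹`, which rescales all roots by `c⁻¹`, the minimal polynomial of `(a^n)⁻¹ • f(α)` is
`σ_{a^n,0}` of that of `f(α)`.
-/

open Polynomial

/-- `sigma a b f` is the polynomial `σ_{a,b}(f)(x) = a^{-deg f} · f(a·x + b)`. -/
noncomputable def sigma {K : Type*} [Field K] (a b : K) (f : K[X]) : K[X] :=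
  C (a⁻¹ ^ f.natDegree) * f.comp (C a * X + C b)

section

variable {K L : Type*} [Field K]

theorem sigma_zero_eq_scaleRoots {c : K} (hc : c ≠ 0) (p : K[X]) :
    sigma c 0 p = p.scaleRoots c⁻¹ := by
  ext i
  rw [sigma, map_zero, add_zero, coeff_C_mul, comp_C_mul_X_coeff, coeff_scaleRoots]
  rcases le_or_gt i p.natDegree with hi | hi
  · rw [inv_pow_sub₀ hc hi]
    ring
  · simp [coeff_eq_zero_of_natDegree_lt hi]

theorem aeval_sigma [CommSemiring L] [Algebra K L] (a b : K) (p : K[X]) (x : L) :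
    aeval x (sigma a b p) =
      a⁻¹ ^ p.natDegree • aeval (algebraMap K L a * x + algebraMap K L b) p := by
  simp [sigma, aeval_comp, Algebra.smul_def]

theorem minpoly_inv_smul [Field L] [Algebra K L] {c : K} (hc : c ≠ 0) {y : L}
    (hy : IsIntegral K y) : minpoly K (c⁻¹ • y) = sigma c 0 (minpoly K y) := by
  rw [IsIntegrallyClosed.minpoly_smul (inv_ne_zero hc) hy, sigma_zero_eq_scaleRoots hc]

end

theorem sigma_wedge_equivariance_general (K : Type*) [Field K] (f g : K[X])
    (a b : K) (ha : a ≠ 0) :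
    ∀ α : AlgebraicClosure K, Polynomial.aeval α g = 0 →
      Polynomial.aeval ((α - algebraMap K (AlgebraicClosure K) b) /
          algebraMap K (AlgebraicClosure K) a) (sigma a b g) = 0 ∧
      minpoly K (Polynomial.aeval ((α - algebraMap K (AlgebraicClosure K) b) /
          algebraMap K (AlgebraicClosure K) a) (sigma a b f)) =
        sigma (a ^ f.natDegree) 0 (minpoly K (Polynomial.aeval α f)) := by
  intro α hα
  have hβ : algebraMap K _ a * ((α - algebraMap K _ b) / algebraMap K _ a) +
      algebraMap K _ b = α := by
    rw [mul_div_cancel₀ _ ((_root_.map_ne_zero _).mpr ha), sub_add_cancel]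
  refine ⟨by rw [aeval_sigma, hβ, hα, smul_zero], ?_⟩
  rw [aeval_sigma, hβ, inv_pow]
  exact minpoly_inv_smul (pow_ne_zero _ ha) (Algebra.IsIntegral.isIntegral _)

/-- Lemma 3.1 (ii): equivariance of the wedge operator under the affine group:
`σ_{a,b}(f) ▷ σ_{a,b}(g) = σ_{a^n,0}(f ▷ g)` where `n = deg f`.  Concretely, for every
root `α` of `g` in the algebraic closure, `(α - b)/a` is a root of `σ_{a,b}(g)`, and the
minimal polynomial of `σ_{a,b}(f)((α - b)/a)` equals `σ_{a^n,0}` applied to the minimal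
polynomial of `f(α)`. -/
theorem sigma_wedge_equivariance (K : Type*) [Field K] (f g : K[X])
    (hf_monic : f.Monic) (hg_monic : g.Monic)
    (hg_irr : Irreducible g) (hg_deg : 0 < g.natDegree)
    (hf_deg : 1 ≤ f.natDegree)
    (a b : K) (ha : a ≠ 0) :
    ∀ α : AlgebraicClosure K, Polynomial.aeval α g = 0 →
      Polynomial.aeval ((α - algebraMap K (AlgebraicClosure K) b) /
          algebraMap K (AlgebraicClosure K) a) (sigma a b g) = 0 ∧
      minpoly K (Polynomial.aeval ((α - algebraMap K (AlgebraicClosure K) b) /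
          algebraMap K (AlgebraicClosure K) a) (sigma a b f)) =
        sigma (a ^ f.natDegree) 0 (minpoly K (Polynomial.aeval α f)) :=
  sigma_wedge_equivariance_general K f g a b ha
end

section
/- Let K be a field with algebraic closure K̄, let f ∈ K[x] be monic, irreducible and nonconstant, let c, b ∈ K, and set g(x) = f(x + c) (so that g lies in the same block as f). Then for every root α ∈ K̄ of f and every root β ∈ K̄ of g, the minimal polynomial over K of f(α − b) equals the minimal polynomial over K of g(β − b). Equivalently, f ▷ f_b⁺ = g ▷ g_b⁺. -/
open Polynomial

/-! Evaluating the shifted polynomial `p = f(x - b)` turns `f(α - b)` into `p(α)` and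
`g(β - b)` into `p(β + c)`, where `β + c` is again a root of `f`. For an irreducible `f`,
every root `x` of `f` in a nontrivial ring is the image of `AdjoinRoot.root f` under an
injective `K`-algebra map, which preserves minimal polynomials; hence the minimal polynomial
of `p(x)` is the same for all roots `x` of `f`. -/

section

variable {K L : Type*} [Field K] [CommRing L] [Nontrivial L] [Algebra K L]

theorem minpoly_aeval_eq_minpoly_aeval_root {f : K[X]} [Fact (Irreducible f)] {x : L}
    (hx : aeval x f = 0) (p : K[X]) :
    minpoly K (aeval x p) = minpoly K (aeval (AdjoinRoot.root f) p) := by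
  let φ := AdjoinRoot.liftAlgHom f (Algebra.ofId K L) x (by simpa [aeval_def] using hx)
  calc minpoly K (aeval x p) = minpoly K (φ (aeval (AdjoinRoot.root f) p)) := by
        rw [← aeval_algHom_apply, AdjoinRoot.liftAlgHom_root]
    _ = minpoly K (aeval (AdjoinRoot.root f) p) := minpoly.algHom_eq φ φ.toRingHom.injective _

theorem minpoly_aeval_eq_of_aeval_eq_zero {f : K[X]} (hf : Irreducible f) {x y : L}
    (hx : aeval x f = 0) (hy : aeval y f = 0) (p : K[X]) :
    minpoly K (aeval x p) = minpoly K (aeval y p) := by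
  have : Fact (Irreducible f) := ⟨hf⟩
  rw [minpoly_aeval_eq_minpoly_aeval_root hx, minpoly_aeval_eq_minpoly_aeval_root hy]

end

theorem block_selfWedge_independent_general (K : Type*) [Field K] (f : K[X])
    (hf_irr : Irreducible f)
    (c b : K) (g : K[X]) (hg : g = f.comp (X + C c)) :
    ∀ α β : AlgebraicClosure K, Polynomial.aeval α f = 0 → Polynomial.aeval β g = 0 →
      minpoly K (Polynomial.aeval (α - algebraMap K (AlgebraicClosure K) b) f) =
      minpoly K (Polynomial.aeval (β - algebraMap K (AlgebraicClosure K) b) g) := by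
  intro α β hα hβ
  subst hg
  have hβc : aeval (β + algebraMap K _ c) f = 0 := by simpa [aeval_comp] using hβ
  have hα_shift : aeval (α - algebraMap K _ b) f = aeval α (f.comp (X - C b)) := by
    simp [aeval_comp]
  have hβ_shift : aeval (β - algebraMap K _ b) (f.comp (X + C c)) =
      aeval (β + algebraMap K _ c) (f.comp (X - C b)) := by
    simp only [aeval_comp, map_add, map_sub, aeval_X, aeval_C]
    ring_nf
  rw [hα_shift, hβ_shift]
  exact minpoly_aeval_eq_of_aeval_eq_zero hf_irr hα hβc _

/-- Lemma 3.1 (iv): if `f` and `g = f(x + c)` lie in the same block, then for every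
`b ∈ K` one has `f ▷ f_b⁺ = g ▷ g_b⁺`.  Concretely, for every root `α` of `f` and every
root `β` of `g` in the algebraic closure, the minimal polynomial of `f(α - b)` equals
the minimal polynomial of `g(β - b)`. -/
theorem block_selfWedge_independent (K : Type*) [Field K] (f : K[X])
    (hf_monic : f.Monic) (hf_irr : Irreducible f) (hf_deg : 0 < f.natDegree)
    (c b : K) (g : K[X]) (hg : g = f.comp (X + C c)) :
    ∀ α β : AlgebraicClosure K, Polynomial.aeval α f = 0 → Polynomial.aeval β g = 0 →
      minpoly K (Polynomial.aeval (α - algebraMap K (AlgebraicClosure K) b) f) =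
      minpoly K (Polynomial.aeval (β - algebraMap K (AlgebraicClosure K) b) g) :=
  block_selfWedge_independent_general K f hf_irr c b g hg
end

section
/- Let K be a field with algebraic closure K̄, let n be a prime number with n·1 ≠ 0 in K (i.e., char K ≠ n), let f ∈ K[x] be monic irreducible of degree n, let b ∈ K with b ≠ 0, and let α ∈ K̄ be a root of f. Then the minimal polynomial over K of f(α − b) has degree exactly n. -/
open Polynomial

/-- If `f` is monic of degree `n ≥ 2`, then the coefficient of `x^(n-1)` in `f(x - b)`
is `f.coeff (n-1) - n * b`. -/
lemma taylor_coeff_pred {K : Type*} [Field K] (f : K[X]) (n : ℕ) (hn : 2 ≤ n)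
    (hf_monic : f.Monic) (hf_deg : f.natDegree = n) (b : K) :
    (taylor (-b) f).coeff (n - 1) = f.coeff (n - 1) + (n : K) * (-b) := by
  rw [taylor_coeff]
  have hdeg : (hasseDeriv (n - 1) f).natDegree ≤ 1 := by
    have := natDegree_hasseDeriv_le f (n - 1)
    omega
  have hfn : f.coeff n = 1 := by rw [← hf_deg]; exact hf_monic.coeff_natDegree
  have h1 : (hasseDeriv (n - 1) f).coeff 1 = (n : K) := by
    rw [hasseDeriv_coeff]
    have e1 : 1 + (n - 1) = n := by omega
    rw [e1, hfn]
    have : n.choose (n - 1) = n := by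
      rw [← Nat.choose_symm (by omega : n - 1 ≤ n)]
      have : n - (n - 1) = 1 := by omega
      rw [this, Nat.choose_one_right]
    rw [this, mul_one]
  have h0 : (hasseDeriv (n - 1) f).coeff 0 = f.coeff (n - 1) := by
    rw [hasseDeriv_coeff]
    simp
  conv_lhs => rw [eq_X_add_C_of_natDegree_le_one hdeg]
  rw [h1, h0]
  simp [add_comm, mul_comm]

/-- Proposition 3.2 (degree invariance of the self-image of a block): if `n` is prime
with `char K ≠ n`, `f` is monic irreducible of degree `n`, and `b ≠ 0`, then for a root
`α` of `f` in the algebraic closure, the minimal polynomial of `f(α - b)` (that is,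
`f ▷ f_b⁺`) has degree exactly `n`. -/
theorem block_selfImage_degree (K : Type*) [Field K] (n : ℕ) (hn : n.Prime)
    (hcharn : (n : K) ≠ 0)
    (f : K[X]) (hf_monic : f.Monic) (hf_irr : Irreducible f) (hf_deg : f.natDegree = n)
    (b : K) (hb : b ≠ 0)
    (α : AlgebraicClosure K) (hα : Polynomial.aeval α f = 0) :
    (minpoly K (Polynomial.aeval (α - algebraMap K (AlgebraicClosure K) b) f)).natDegree
      = n := by
  set b' := algebraMap K (AlgebraicClosure K) b with hb'
  set β := Polynomial.aeval (α - b') f with hβ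
  have hα_int : IsIntegral K α := ⟨f, hf_monic, hα⟩
  have hminα : minpoly K α = f := (minpoly.eq_of_irreducible_of_monic hf_irr hα hf_monic).symm
  set E := IntermediateField.adjoin K {α} with hE
  have hαE : α ∈ E := IntermediateField.mem_adjoin_simple_self K α
  haveI : FiniteDimensional K E := IntermediateField.adjoin.finiteDimensional hα_int
  have hrank : Module.finrank K E = n := by
    rw [hE, IntermediateField.adjoin.finrank hα_int, hminα, hf_deg]
  -- β lies in E
  set β' : E := Polynomial.aeval ((⟨α, hαE⟩ : E) - algebraMap K E b) f with hβ'
  have hmap : algebraMap E (AlgebraicClosure K) β' = β := by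
    rw [hβ', ← Polynomial.aeval_algebraMap_apply]
    simp [hβ, hb', ← IsScalarTower.algebraMap_apply K (↥E) (AlgebraicClosure K)]
  have hminβ : minpoly K β = minpoly K β' := by
    rw [← hmap]
    exact minpoly.algebraMap_eq (algebraMap E (AlgebraicClosure K)).injective β'
  have hdvd : (minpoly K β').natDegree ∣ n := hrank ▸ minpoly.degree_dvd (.of_finite K β')
  rcases (Nat.Prime.eq_one_or_self_of_dvd hn _ hdvd) with h1 | h1
  · -- degree 1 case: β ∈ K, derive contradiction
    exfalso
    have hβrange : β ∈ (algebraMap K (AlgebraicClosure K)).range := by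
      rw [← hminβ] at h1
      exact minpoly.natDegree_eq_one_iff.mp h1
    obtain ⟨c, hc⟩ := hβrange
    -- g = f(x - b) - c vanishes at α and is monic of degree n
    set g : K[X] := taylor (-b) f - C c with hg
    have hgα : Polynomial.aeval α g = 0 := by
      rw [hg, map_sub, taylor_apply, aeval_comp]
      simp only [map_add, aeval_X, aeval_C, map_neg]
      rw [← hb']
      rw [show α + -b' = α - b' from by ring, ← hβ, hc]
      simp
    have hgdeg : g.natDegree = n := by
      rw [hg, natDegree_sub_C, natDegree_taylor, hf_deg]
    have hn2 : 2 ≤ n := hn.two_le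
    have hgmonic : g.Monic := by
      have : (taylor (-b) f).Monic := by
        rw [taylor_apply]
        exact hf_monic.comp_X_add_C _
      unfold Polynomial.Monic at this ⊢
      rwa [hg, leadingCoeff, natDegree_sub_C, coeff_sub, coeff_C,
        if_neg (by rw [natDegree_taylor, hf_deg]; omega), sub_zero]
    -- f divides g, both monic of degree n, so f = g
    have hfg : f = g := by
      have hdvd' : f ∣ g := hminα ▸ minpoly.dvd K α hgα
      obtain ⟨q, hq⟩ := hdvd'
      have hqne : q ≠ 0 := by
        rintro rfl
        rw [mul_zero] at hq
        rw [hq] at hgdeg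
        simp at hgdeg; omega
      have hqdeg : q.natDegree = 0 := by
        have := natDegree_mul (hf_monic.ne_zero) hqne
        rw [← hq, hgdeg, hf_deg] at this
        omega
      have hqlc : q.leadingCoeff = 1 := by
        have := hgmonic
        rw [hq] at this
        have h2 := this.leadingCoeff
        rwa [leadingCoeff_mul, hf_monic.leadingCoeff, one_mul] at h2
      have : q = 1 := by
        rw [Polynomial.eq_C_of_natDegree_eq_zero hqdeg]
        rw [leadingCoeff, hqdeg] at hqlc
        rw [hqlc]; simp
      rw [hq, this, mul_one]
    -- coefficient comparison at n - 1
    have hcoeff : f.coeff (n - 1) = g.coeff (n - 1) := by rw [hfg]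
    rw [hg, coeff_sub, coeff_C, if_neg (by omega),
      taylor_coeff_pred f n hn2 hf_monic hf_deg b, sub_zero] at hcoeff
    have h0 : (n : K) * -b = 0 := (left_eq_add.mp hcoeff)
    rcases mul_eq_zero.mp h0 with h | h
    · exact hcharn h
    · exact hb (neg_eq_zero.mp h)
  · rw [hminβ, h1]
end

section
/- Let K be a field with algebraic closure K̄, let f ∈ K[x] be monic, irreducible and nonconstant, and let b, c ∈ K with b ≠ 0. Suppose that for some root α ∈ K̄ of f, the minimal polynomial over K of f(α − b) equals f_c⁺ (that is, f ▷ f_b⁺ = f_c⁺). Set θ = f_c⁺. Then for every root γ ∈ K̄ of θ, the element θ(γ − b) is again a root of θ, i.e., the minimal polynomial over K of θ(γ − b) equals θ. Consequently θ_{−b}⁺ ▷ θ = θ and θ ▷ θ_b⁺ = θ, so θ is simultaneously a right and a left invariant of polynomials in its own block. -/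
open Polynomial

/-! If `γ` is a root of `θ = f(x + c)`, then `γ + c` is a Galois conjugate of `α`, so
`θ(γ - b) = f((γ + c) - b)` is a conjugate of `f(α - b)` and shares its minimal polynomial `θ`. -/

theorem minpoly_aeval_eq_of_minpoly_eq {K L : Type*} [Field K] [Field L] [Algebra K L]
    [Normal K L] {x y : L} (h : minpoly K x = minpoly K y) (p : K[X]) :
    minpoly K (aeval x p) = minpoly K (aeval y p) := by
  obtain ⟨σ, hσ⟩ := (Normal.minpoly_eq_iff_mem_orbit L).mp h.symm
  have hσy : σ x = y := hσ
  rw [← hσy, aeval_algEquiv, AlgHom.comp_apply]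
  exact (minpoly.algEquiv_eq σ _).symm

theorem rightLeftInvariant_of_block_selfIntersect_general (K : Type*) [Field K] (f : K[X])
    (hf_monic : f.Monic) (hf_irr : Irreducible f)
    (b c : K)
    (α : AlgebraicClosure K) (hα : Polynomial.aeval α f = 0)
    (hwedge : minpoly K (Polynomial.aeval (α - algebraMap K (AlgebraicClosure K) b) f)
      = f.comp (X + C c))
    (θ : K[X]) (hθ : θ = f.comp (X + C c)) :
    ∀ γ : AlgebraicClosure K, Polynomial.aeval γ θ = 0 →
      minpoly K (Polynomial.aeval (γ - algebraMap K (AlgebraicClosure K) b) θ) = θ := by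
  intro γ hγ
  subst hθ
  set β := γ + algebraMap K (AlgebraicClosure K) c
  have hβ : aeval β f = 0 := by simpa [aeval_comp, β] using hγ
  have hconj : minpoly K α = minpoly K β := by
    rw [← minpoly.eq_of_irreducible_of_monic hf_irr hα hf_monic,
      ← minpoly.eq_of_irreducible_of_monic hf_irr hβ hf_monic]
  have hshift : ∀ x : AlgebraicClosure K,
      aeval (x - algebraMap K _ b) f = aeval x (f.comp (X - C b)) := by
    intro x; simp [aeval_comp]
  have hγβ :
      aeval (γ - algebraMap K _ b) (f.comp (X + C c)) = aeval (β - algebraMap K _ b) f := by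
    simp only [aeval_comp, map_add, aeval_X, aeval_C, β]; ring_nf
  rw [hγβ, hshift, ← minpoly_aeval_eq_of_minpoly_eq hconj, ← hshift, hwedge]

/-- Theorem 3.3 (right–left invariants from self-intersecting blocks): suppose `f` is
monic irreducible nonconstant, `b ≠ 0`, and for some root `α` of `f` the minimal
polynomial of `f(α - b)` equals the shift `f_c⁺ = f(x + c)` (i.e. `f ▷ f_b⁺ = f_c⁺`,
so the block of `f` meets its self-image).  Put `θ = f_c⁺`.  Then for every root `γ`
of `θ`, `θ(γ - b)` is again a root of `θ`: `minpoly K (θ(γ - b)) = θ`.  Consequently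
`θ_{-b}⁺ ▷ θ = θ` and `θ ▷ θ_b⁺ = θ`, i.e. `θ` is a right-left invariant of
polynomials in its own block. -/
theorem rightLeftInvariant_of_block_selfIntersect (K : Type*) [Field K] (f : K[X])
    (hf_monic : f.Monic) (hf_irr : Irreducible f) (hf_deg : 0 < f.natDegree)
    (b c : K) (hb : b ≠ 0)
    (α : AlgebraicClosure K) (hα : Polynomial.aeval α f = 0)
    (hwedge : minpoly K (Polynomial.aeval (α - algebraMap K (AlgebraicClosure K) b) f)
      = f.comp (X + C c))
    (θ : K[X]) (hθ : θ = f.comp (X + C c)) :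
    ∀ γ : AlgebraicClosure K, Polynomial.aeval γ θ = 0 →
      minpoly K (Polynomial.aeval (γ - algebraMap K (AlgebraicClosure K) b) θ) = θ :=
  rightLeftInvariant_of_block_selfIntersect_general K f hf_monic hf_irr b c α hα hwedge θ hθ
end

section
/- Let K be a field with char K ≠ 2 and algebraic closure K̄, let f be a monic irreducible quadratic polynomial over K with discriminant Δ(f), and let b ∈ K with b ≠ 0. Then: (i) for every root α ∈ K̄ of f, the minimal polynomial over K of f(α − b) equals (x − b²)² − b²Δ(f); that is, f ▷ f_b⁺ = (x − b²)² − b²Δ(f), a monic irreducible quadratic; and (ii) the discriminant of f ▷ f_b⁺ equals (2b)²Δ(f). -/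
open Polynomial

/-- The discriminant of a monic quadratic `x² + Bx + C`, namely `B² - 4C`. -/
def disc {K : Type*} [Field K] (f : K[X]) : K :=
  f.coeff 1 ^ 2 - 4 * f.coeff 0

/-!
Write `f = X² + BX + C` and let `α` be a root of `f`. Then `δ := 2α + B` satisfies `δ² = Δ(f)`
and, by Taylor expansion at `α`, `f(α - b) = b² - bδ`. Hence `γ := f(α - b)` is a root of
`g := (X - b²)² - b²Δ(f)`. Over a field of characteristic `≠ 2` the quadratic formula shows that
`Δ(f)` is not a square when `f` is irreducible, so neither is `b²Δ(f)` for `b ≠ 0`, and `g` has no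
root in `K`: it is irreducible, hence the minimal polynomial of `γ`.
-/

section XSubCSqSubC

theorem monic_X_sub_C_sq_sub_C {R : Type*} [CommRing R] [Nontrivial R] (c d : R) :
    ((X - C c) ^ 2 - C d).Monic := by
  monicity!

theorem natDegree_X_sub_C_sq_sub_C {R : Type*} [CommRing R] [Nontrivial R] (c d : R) :
    ((X - C c) ^ 2 - C d).natDegree = 2 := by
  compute_degree!

variable {K : Type*} [Field K]

theorem disc_X_sub_C_sq_sub_C (c d : K) : disc ((X - C c) ^ 2 - C d) = 4 * d := by
  have hexpand : (X - C c) ^ 2 - C d = X ^ 2 + C (-2 * c) * X + C (c ^ 2 - d) := by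
    simp only [C_mul, C_neg, C_sub, C_pow, C_ofNat]
    ring
  rw [disc, hexpand]
  simp only [coeff_add, coeff_C_mul, coeff_X_pow, coeff_X, coeff_C]
  norm_num
  ring

theorem irreducible_X_sub_C_sq_sub_C {d : K} (hd : ¬IsSquare d) (c : K) :
    Irreducible ((X - C c) ^ 2 - C d) := by
  refine irreducible_of_degree_le_three_of_not_isRoot
    (by rw [natDegree_X_sub_C_sq_sub_C]; decide) fun r hr => hd ⟨r - c, ?_⟩
  simp only [IsRoot, eval_sub, eval_pow, eval_X, eval_C] at hr
  linear_combination -hr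

end XSubCSqSubC

theorem Polynomial.Monic.eq_X_sq_add_of_natDegree_eq_two {R : Type*} [CommSemiring R] {p : R[X]}
    (hp : p.Monic) (hdeg : p.natDegree = 2) : p = X ^ 2 + C (p.coeff 1) * X + C (p.coeff 0) := by
  conv_lhs => rw [hp.as_sum, hdeg]
  simp only [Finset.sum_range_succ, Finset.sum_range_zero, pow_zero, pow_one, mul_one, zero_add]
  ring

section MonicQuadratic

variable {K : Type*} [Field K] {f : K[X]}

theorem not_isSquare_disc_of_irreducible [NeZero (2 : K)] (hf : f.Monic) (hdeg : f.natDegree = 2)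
    (hirr : Irreducible f) : ¬IsSquare (disc f) := by
  rintro ⟨s, hs⟩
  obtain ⟨x, hx⟩ := exists_quadratic_eq_zero (a := (1 : K)) (b := f.coeff 1) (c := f.coeff 0)
    one_ne_zero ⟨s, by rw [discrim, ← hs, disc]; ring⟩
  have hroot : f.IsRoot x := by
    rw [hf.eq_X_sq_add_of_natDegree_eq_two hdeg]
    simp only [IsRoot, eval_add, eval_mul, eval_pow, eval_X, eval_C]
    linear_combination hx
  have := degree_eq_one_of_irreducible_of_root hirr hroot
  rw [degree_eq_natDegree hf.ne_zero, hdeg] at this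
  exact absurd this (by decide)

theorem aeval_sub_algebraMap_sub_sq {A : Type*} [CommRing A] [Algebra K A]
    (hf : f.Monic) (hdeg : f.natDegree = 2) {α : A} (hα : aeval α f = 0) (b : K) :
    (aeval (α - algebraMap K A b) f - algebraMap K A (b ^ 2)) ^ 2
      = algebraMap K A (b ^ 2 * disc f) := by
  have hf_eq := hf.eq_X_sq_add_of_natDegree_eq_two hdeg
  rw [hf_eq] at hα
  conv_lhs => rw [hf_eq]
  simp only [disc, map_add, map_sub, map_mul, map_pow, map_ofNat, aeval_X, aeval_C] at hα ⊢
  linear_combination (α ^ 2 + algebraMap K A (f.coeff 1) * α + algebraMap K A (f.coeff 0)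
    - 2 * algebraMap K A b * (2 * α + algebraMap K A (f.coeff 1))
    + 4 * algebraMap K A b ^ 2) * hα

theorem not_isSquare_sq_mul {b d : K} (hb : b ≠ 0) (hd : ¬IsSquare d) : ¬IsSquare (b ^ 2 * d) :=
  fun h => hd (by simpa [hb] using h.div (IsSquare.sq b))

theorem minpoly_aeval_sub_algebraMap [NeZero (2 : K)] {L : Type*} [CommRing L] [Nontrivial L]
    [Algebra K L] (hf : f.Monic) (hdeg : f.natDegree = 2) (hirr : Irreducible f) {α : L}
    (hα : aeval α f = 0) {b : K} (hb : b ≠ 0) :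
    minpoly K (aeval (α - algebraMap K L b) f) = (X - C (b ^ 2)) ^ 2 - C (b ^ 2 * disc f) := by
  have hirr' := irreducible_X_sub_C_sq_sub_C
    (not_isSquare_sq_mul hb (not_isSquare_disc_of_irreducible hf hdeg hirr)) (b ^ 2)
  refine (minpoly.eq_of_irreducible_of_monic hirr' ?_ (monic_X_sub_C_sq_sub_C _ _)).symm
  simpa only [map_sub, map_pow, aeval_X, aeval_C, sub_eq_zero]
    using aeval_sub_algebraMap_sub_sq hf hdeg hα b

end MonicQuadratic

/-- Lemma 4.2 (i) and (ii): for a monic irreducible quadratic `f` over a field of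
characteristic `≠ 2` and `b ≠ 0`, one has `f ▷ f_b⁺ = (x - b²)² - b²·Δ(f)`, a monic
irreducible quadratic, and `Δ(f ▷ f_b⁺) = (2b)²·Δ(f)`. -/
theorem quadratic_selfWedge (K : Type*) [Field K] (hchar : ringChar K ≠ 2)
    (f : K[X]) (hf_monic : f.Monic) (hf_irr : Irreducible f) (hf_deg : f.natDegree = 2)
    (b : K) (hb : b ≠ 0) :
    (∀ α : AlgebraicClosure K, Polynomial.aeval α f = 0 →
      minpoly K (Polynomial.aeval (α - algebraMap K (AlgebraicClosure K) b) f)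
        = (X - C (b ^ 2)) ^ 2 - C (b ^ 2 * disc f)) ∧
    ((X - C (b ^ 2)) ^ 2 - C (b ^ 2 * disc f) : K[X]).Monic ∧
    Irreducible ((X - C (b ^ 2)) ^ 2 - C (b ^ 2 * disc f) : K[X]) ∧
    ((X - C (b ^ 2)) ^ 2 - C (b ^ 2 * disc f) : K[X]).natDegree = 2 ∧
    disc ((X - C (b ^ 2)) ^ 2 - C (b ^ 2 * disc f) : K[X]) = (2 * b) ^ 2 * disc f := by
  have : NeZero (2 : K) := ⟨Ring.two_ne_zero hchar⟩
  have hdisc := not_isSquare_disc_of_irreducible hf_monic hf_deg hf_irr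
  refine ⟨fun α hα => minpoly_aeval_sub_algebraMap hf_monic hf_deg hf_irr hα hb,
    monic_X_sub_C_sq_sub_C _ _, irreducible_X_sub_C_sq_sub_C (not_isSquare_sq_mul hb hdisc) _,
    natDegree_X_sub_C_sq_sub_C _ _, ?_⟩
  rw [disc_X_sub_C_sq_sub_C]
  ring
end

section
/- Let K be a field with char K ≠ 2 and algebraic closure K̄. Then there do not exist monic irreducible quadratic polynomials f ≠ g over K such that f ▷ g = f and g ▷ f = g; that is, there are no quadratic stable 2-sets of type II over K. Explicitly: there are no distinct monic irreducible quadratics f, g over K such that for every root β ∈ K̄ of g the minimal polynomial over K of f(β) equals f, and for every root α ∈ K̄ of f the minimal polynomial over K of g(α) equals g. -/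
/-!
Write `f = X² + aX + b` and `g = X² + cX + d`. For a root `β` of `g` we have
`f(β) = (a - c)β + (b - d)`, and `f(f(β)) = 0` because `f` is the minimal polynomial of `f(β)`.
Reducing `f(f(β))` modulo `g(β) = 0` gives a `K`-linear relation between `1` and `β`; as `β ∉ K`,
both of its coefficients vanish. The same argument with `f` and `g` exchanged gives two more
equations, and when `2 ≠ 0` these four polynomial equations in `a, b, c, d` force `f` to have a root
in `K`, contradicting irreducibility.
-/

open Polynomial

theorem Polynomial.Monic.eq_X_sq_add_C_mul_X_add_C {R : Type*} [CommRing R] {p : R[X]}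
    (hm : p.Monic) (hd : p.natDegree = 2) : p = X ^ 2 + C (p.coeff 1) * X + C (p.coeff 0) := by
  have h2 : p.coeff 2 = 1 := hd ▸ hm.coeff_natDegree
  conv_lhs => rw [p.as_sum_range_C_mul_X_pow, hd]
  simp only [Finset.sum_range_succ, Finset.sum_range_zero, h2, map_one]
  ring

theorem eq_zero_of_algebraMap_mul_add_eq_zero {K L : Type*} [Field K] [CommRing L] [Nontrivial L]
    [Algebra K L] {p q : K} {β : L} (hβ : β ∉ (algebraMap K L).range)
    (h : algebraMap K L p * β + algebraMap K L q = 0) : p = 0 ∧ q = 0 := by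
  have hp : p = 0 := by
    by_contra hp
    refine hβ ⟨-q / p, ?_⟩
    have hinv : algebraMap K L p⁻¹ * algebraMap K L p = 1 := by
      rw [← map_mul, inv_mul_cancel₀ hp, map_one]
    rw [neg_div, div_eq_inv_mul, map_neg, map_mul]
    linear_combination -algebraMap K L p⁻¹ * h + β * hinv
  refine ⟨hp, (algebraMap K L).injective ?_⟩
  simpa [hp] using h

theorem quadratic_relations_of_aeval_aeval_eq_zero {K L : Type*} [Field K] [CommRing L]
    [Nontrivial L] [Algebra K L] {a b c d : K} {β : L} (hβK : β ∉ (algebraMap K L).range)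
    (hβ : aeval β (X ^ 2 + C c * X + C d) = 0)
    (h : aeval (aeval β (X ^ 2 + C a * X + C b)) (X ^ 2 + C a * X + C b) = 0) :
    (a - c) * (2 * (b - d) + a - c * (a - c)) = 0 ∧
      (b - d) ^ 2 + a * (b - d) + b - d * (a - c) ^ 2 = 0 := by
  simp only [map_add, map_mul, map_pow, aeval_X, aeval_C] at hβ h
  refine eq_zero_of_algebraMap_mul_add_eq_zero hβK ?_
  simp only [map_add, map_mul, map_sub, map_pow, map_ofNat]
  set u := algebraMap K L a - algebraMap K L c
  set v := algebraMap K L b - algebraMap K L d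
  set gβ := β ^ 2 + algebraMap K L c * β + algebraMap K L d
  -- `f(β) = uβ + v + g(β)`, and `f(uβ + v) - u² g(β)` is the linear polynomial in `β` of the goal.
  linear_combination h - (u ^ 2 + 2 * (u * β + v) + gβ + algebraMap K L a) * hβ

theorem exists_quadratic_root_of_relations {K : Type*} [Field K] (h2 : (2 : K) ≠ 0) {a b c d : K}
    (e₁ : (a - c) * (2 * (b - d) + a - c * (a - c)) = 0)
    (e₂ : (b - d) ^ 2 + a * (b - d) + b - d * (a - c) ^ 2 = 0)
    (e₃ : (c - a) * (2 * (d - b) + c - a * (c - a)) = 0)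
    (e₄ : (d - b) ^ 2 + c * (d - b) + d - b * (c - a) ^ 2 = 0) :
    ∃ r, r ^ 2 + a * r + b = 0 := by
  obtain hu | hu := eq_or_ne (a - c) 0
  · exact ⟨b - d, by linear_combination e₂ + d * (a - c) * hu⟩
  have s₁ : 2 * (b - d) + a - c * (a - c) = 0 := (mul_eq_zero.mp e₁).resolve_left hu
  have s₃ : 2 * (d - b) + c - a * (c - a) = 0 :=
    (mul_eq_zero.mp e₃).resolve_left (sub_ne_zero.mpr (sub_ne_zero.mp hu).symm)
  have hsum : (a - c) ^ 2 + a + c = 0 := by linear_combination s₁ + s₃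
  have hv : b - d = 0 := by linear_combination e₂ - e₄ - (b - d) * hsum
  have hu2 : (a - c) ^ 2 = -1 :=
    mul_left_cancel₀ hu (by linear_combination s₁ - s₃ + (a - c) * hsum - 4 * hv)
  have hb : b = 0 := by
    refine (mul_eq_zero.mp (?_ : 2 * b = 0)).resolve_left h2
    linear_combination e₂ + d * hu2 + (1 - (b - d) - a) * hv
  exact ⟨0, by simp [hb]⟩

/-- Theorem 4.4: if `char K ≠ 2`, there are no quadratic stable 2-sets of type II over
`K`: there do not exist distinct monic irreducible quadratics `f ≠ g` with `f ▷ g = f`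
and `g ▷ f = g` (i.e. for every root `β` of `g`, `minpoly K (f(β)) = f`, and for every
root `α` of `f`, `minpoly K (g(α)) = g`). -/
theorem no_quadratic_typeII (K : Type*) [Field K] (hchar : ringChar K ≠ 2) :
    ¬ ∃ f g : K[X], f ≠ g ∧
      f.Monic ∧ Irreducible f ∧ f.natDegree = 2 ∧
      g.Monic ∧ Irreducible g ∧ g.natDegree = 2 ∧
      (∀ β : AlgebraicClosure K, Polynomial.aeval β g = 0 →
        minpoly K (Polynomial.aeval β f) = f) ∧
      (∀ α : AlgebraicClosure K, Polynomial.aeval α f = 0 →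
        minpoly K (Polynomial.aeval α g) = g) := by
  rintro ⟨f, g, -, hfm, hfi, hfd, hgm, hgi, hgd, hfg, hgf⟩
  obtain ⟨α, hα⟩ := IsAlgClosed.exists_aeval_eq_zero (AlgebraicClosure K) f
    (degree_pos_of_irreducible hfi).ne'
  obtain ⟨β, hβ⟩ := IsAlgClosed.exists_aeval_eq_zero (AlgebraicClosure K) g
    (degree_pos_of_irreducible hgi).ne'
  have hαK : α ∉ (algebraMap K (AlgebraicClosure K)).range := fun h ↦
    hfi.aeval_ne_zero_of_natDegree_ne_one (by omega) h hα
  have hβK : β ∉ (algebraMap K (AlgebraicClosure K)).range := fun h ↦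
    hgi.aeval_ne_zero_of_natDegree_ne_one (by omega) h hβ
  have hff : aeval (aeval β f) f = 0 := by
    simpa only [hfg β hβ] using minpoly.aeval K (aeval β f)
  have hgg : aeval (aeval α g) g = 0 := by
    simpa only [hgf α hα] using minpoly.aeval K (aeval α g)
  have hf := hfm.eq_X_sq_add_C_mul_X_add_C hfd
  have hg := hgm.eq_X_sq_add_C_mul_X_add_C hgd
  rw [hf] at hα hff
  rw [hg] at hβ hgg
  obtain ⟨e₁, e₂⟩ := quadratic_relations_of_aeval_aeval_eq_zero hβK hβ hff
  obtain ⟨e₃, e₄⟩ := quadratic_relations_of_aeval_aeval_eq_zero hαK hα hgg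
  obtain ⟨r, hr⟩ := exists_quadratic_root_of_relations (Ring.two_ne_zero hchar) e₁ e₂ e₃ e₄
  exact hfi.not_isRoot_of_natDegree_ne_one (by omega) (x := r) (by rw [hf]; simpa using hr)
end

section
/- Let K be a field with char K ≠ 2 and algebraic closure K̄, let f, g be monic irreducible quadratic polynomials over K, and let b ∈ K with b ≠ 0. Let h = f ▷ f_b⁺ = (x − b²)² − b²Δ(f) and l = g ▷ g_b⁺ = (x − b²)² − b²Δ(g). Then for every root α ∈ K̄ of l, h(α) = b²(Δ(g) − Δ(f)), which lies in K. Consequently, if Δ(f) ≠ Δ(g), then (f ▷ f_b⁺) ▷ (g ▷ g_b⁺) = x − b²(Δ(g) − Δ(f)), a polynomial of degree one. -/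
open Polynomial

theorem aeval_sub_C_eq_of_aeval_sub_C_eq_zero {R A : Type*} [CommRing R] [CommRing A]
    [Algebra R A] (p : R[X]) (c d : R) {α : A} (hα : aeval α (p - C c) = 0) :
    aeval α (p - C d) = algebraMap R A (c - d) := by
  rw [map_sub, aeval_C, sub_eq_zero] at hα
  rw [map_sub, aeval_C, hα, map_sub]

theorem quadratic_transition_general (K : Type*) [Field K]
    (f g : K[X])
    (b : K) (h l : K[X])
    (hh : h = (X - C (b ^ 2)) ^ 2 - C (b ^ 2 * disc f))
    (hl : l = (X - C (b ^ 2)) ^ 2 - C (b ^ 2 * disc g)) :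
    (∀ α : AlgebraicClosure K, Polynomial.aeval α l = 0 →
      Polynomial.aeval α h =
        algebraMap K (AlgebraicClosure K) (b ^ 2 * (disc g - disc f))) ∧
    (disc f ≠ disc g → ∀ α : AlgebraicClosure K, Polynomial.aeval α l = 0 →
      minpoly K (Polynomial.aeval α h) = X - C (b ^ 2 * (disc g - disc f))) := by
  have value_at_root : ∀ α : AlgebraicClosure K, aeval α l = 0 →
      aeval α h = algebraMap K (AlgebraicClosure K) (b ^ 2 * (disc g - disc f)) := by
    intro α hα
    subst hh hl
    rw [mul_sub]
    exact aeval_sub_C_eq_of_aeval_sub_C_eq_zero _ _ _ hα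
  refine ⟨value_at_root, fun _ α hα => ?_⟩
  rw [value_at_root α hα, minpoly.eq_X_sub_C]

/-- Proposition 4.5 (transition to the ground field): with `char K ≠ 2`, `f, g` monic
irreducible quadratics, `b ≠ 0`, `h = f ▷ f_b⁺ = (x - b²)² - b²Δ(f)` and
`l = g ▷ g_b⁺ = (x - b²)² - b²Δ(g)`, for every root `α` of `l` one has
`h(α) = b²(Δ(g) - Δ(f)) ∈ K`; hence if `Δ(f) ≠ Δ(g)`, then
`(f ▷ f_b⁺) ▷ (g ▷ g_b⁺) = x - b²(Δ(g) - Δ(f))` has degree one. -/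
theorem quadratic_transition (K : Type*) [Field K] (hchar : ringChar K ≠ 2)
    (f g : K[X])
    (hf_monic : f.Monic) (hf_irr : Irreducible f) (hf_deg : f.natDegree = 2)
    (hg_monic : g.Monic) (hg_irr : Irreducible g) (hg_deg : g.natDegree = 2)
    (b : K) (hb : b ≠ 0) (h l : K[X])
    (hh : h = (X - C (b ^ 2)) ^ 2 - C (b ^ 2 * disc f))
    (hl : l = (X - C (b ^ 2)) ^ 2 - C (b ^ 2 * disc g)) :
    (∀ α : AlgebraicClosure K, Polynomial.aeval α l = 0 →
      Polynomial.aeval α h =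
        algebraMap K (AlgebraicClosure K) (b ^ 2 * (disc g - disc f))) ∧
    (disc f ≠ disc g → ∀ α : AlgebraicClosure K, Polynomial.aeval α l = 0 →
      minpoly K (Polynomial.aeval α h) = X - C (b ^ 2 * (disc g - disc f))) :=
  quadratic_transition_general K f g b h l hh hl
end

section
/- Let K be a field with algebraic closure K̄, let r, b, c ∈ K with b ≠ c, and let f(x) = x² + bx + r and g(x) = x² + cx + r be monic quadratics over K with g irreducible. Then for every root α ∈ K̄ of g one has f(α) = (b − c)α, and the minimal polynomial over K of f(α) equals x² + c(b − c)x + r(b − c)²; that is, f ▷ g = x² + c(b − c)x + r(b − c)², whose discriminant equals (b − c)²Δ(g). -/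
open Polynomial

section MonicQuadratic

variable {R : Type*} [CommRing R]

theorem aeval_monicQuadratic_eq_add {A : Type*} [CommRing A] [Algebra R A] (b c r : R) (α : A) :
    aeval α (X ^ 2 + C b * X + C r) =
      aeval α (X ^ 2 + C c * X + C r) + algebraMap R A (b - c) * α := by
  simp only [map_add, map_mul, map_pow, map_sub, aeval_X, aeval_C]
  ring

theorem coeff_monicQuadratic (c r : R) (n : ℕ) :
    (X ^ 2 + C c * X + C r : R[X]).coeff n = if n = 2 then 1 else if n = 1 then c else
      if n = 0 then r else 0 := by
  rcases n with _ | _ | _ | n <;> simp [coeff_X, coeff_C, coeff_X_pow]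

theorem scaleRoots_monicQuadratic (c r s : R) :
    (X ^ 2 + C c * X + C r : R[X]).scaleRoots s = X ^ 2 + C (c * s) * X + C (r * s ^ 2) := by
  nontriviality R
  have hdeg : (X ^ 2 + C c * X + C r : R[X]).natDegree = 2 := by compute_degree!
  ext n
  rw [coeff_scaleRoots, hdeg, coeff_monicQuadratic, coeff_monicQuadratic]
  rcases n with _ | _ | _ | n <;> simp

end MonicQuadratic

theorem disc_monicQuadratic {K : Type*} [Field K] (c r : K) :
    disc (X ^ 2 + C c * X + C r : K[X]) = c ^ 2 - 4 * r := by
  simp only [disc, coeff_monicQuadratic]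
  norm_num

/-- The basic computation behind the dynamics of quadratic 2-sets (section 4.2):
for `f = x² + bx + r`, `g = x² + cx + r` with `b ≠ c` and `g` irreducible, every root
`α` of `g` satisfies `f(α) = (b - c)α`, and
`f ▷ g = x² + c(b - c)x + r(b - c)²`, whose discriminant is `(b - c)²Δ(g)`. -/
theorem quadratic_pair_wedge (K : Type*) [Field K] (b c r : K) (hbc : b ≠ c)
    (f g : K[X]) (hf : f = X ^ 2 + C b * X + C r) (hg : g = X ^ 2 + C c * X + C r)
    (hg_irr : Irreducible g) :
    (∀ α : AlgebraicClosure K, Polynomial.aeval α g = 0 →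
      Polynomial.aeval α f = algebraMap K (AlgebraicClosure K) (b - c) * α ∧
      minpoly K (Polynomial.aeval α f)
        = X ^ 2 + C (c * (b - c)) * X + C (r * (b - c) ^ 2)) ∧
    disc (X ^ 2 + C (c * (b - c)) * X + C (r * (b - c) ^ 2) : K[X])
      = (b - c) ^ 2 * disc g := by
  subst hf hg
  refine ⟨fun α hα => ?_, by rw [disc_monicQuadratic, disc_monicQuadratic]; ring⟩
  have hfα : aeval α (X ^ 2 + C b * X + C r) = algebraMap K _ (b - c) * α := by
    rw [aeval_monicQuadratic_eq_add b c, hα, zero_add]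
  have hmin : minpoly K α = X ^ 2 + C c * X + C r :=
    (minpoly.eq_of_irreducible_of_monic hg_irr hα (by monicity!)).symm
  refine ⟨hfα, ?_⟩
  rw [hfα, ← Algebra.smul_def, IsIntegrallyClosed.minpoly_smul (sub_ne_zero.2 hbc)
    (Algebra.IsIntegral.isIntegral α), hmin, scaleRoots_monicQuadratic]
end

section
/- Let R be a commutative ring and define Ψ : R³ → R³ by Ψ(u, v, r) = (uv, −u², ru²). For t ≥ 1 set e_t = (2^t − (−1)^t)/3 (a positive integer, with e_1 = e_2 = 1 and e_{t+1} = e_t + 2e_{t−1}). Then for all (u, v, r) ∈ R³ and all t ≥ 1: if t is odd, Ψ^t(u, v, r) = (u^{2e_t − 1} v^{e_t}, −u^{2e_t} v^{e_t − 1}, r·u^{4e_t − 2} v^{2e_t − 2}); and if t is even, Ψ^t(u, v, r) = (−u^{2e_t + 1} v^{e_t}, −u^{2e_t} v^{e_t + 1}, r·u^{4e_t} v^{2e_t}). -/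
/-- The auxiliary three-dimensional skew map `Ψ(u, v, r) = (uv, -u², ru²)` governing
the dynamics of quadratic 2-sets. -/
def Psi (R : Type*) [CommRing R] : R × R × R → R × R × R :=
  fun p => (p.1 * p.2.1, -p.1 ^ 2, p.2.2 * p.1 ^ 2)

/-- The sequence `e_t = (2^t - (-1)^t)/3`, with `e_0 = 0`, `e_1 = e_2 = 1` and
`e_{t+1} = e_t + 2 e_{t-1}`. -/
def eSeq : ℕ → ℕ
  | 0 => 0
  | 1 => 1
  | n + 2 => eSeq (n + 1) + 2 * eSeq n

/-!
Ψ sends the "even shape" `(-u z, -v z, r z²)`, `z = (u²v)^e`, to the "odd shape"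
`(z'/u, -z'/v, r (z'/(uv))²)` with exponent `e' = 2e + 1`, and the odd shape with exponent `e`
back to the even shape with exponent `2e - 1`. Both exponent updates are `e_{t+1} = 2 e_t + (-1)^t`,
so the formula follows by induction on `t`, starting from `Ψ(u, v, r)`, the odd shape with `e = 1`.
-/

theorem cast_eSeq_succ (t : ℕ) : (eSeq (t + 1) : ℤ) = 2 * eSeq t + (-1) ^ t := by
  induction t with
  | zero => simp [eSeq]
  | succ t ih =>
    rw [show eSeq (t + 2) = eSeq (t + 1) + 2 * eSeq t from rfl]
    push_cast
    rw [ih, pow_succ]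
    ring

theorem eSeq_two_mul_add_one (s : ℕ) : eSeq (2 * s + 1) = 2 * eSeq (2 * s) + 1 := by
  have h := cast_eSeq_succ (2 * s)
  rw [(even_two_mul s).neg_one_pow] at h
  omega

theorem eSeq_two_mul_add_two (s : ℕ) : eSeq (2 * s + 2) = 2 * (2 * eSeq (2 * s)) + 1 := by
  have h : (eSeq (2 * s + 2) : ℤ) = _ := cast_eSeq_succ (2 * s + 1)
  rw [(odd_two_mul_add_one s).neg_one_pow] at h
  have := eSeq_two_mul_add_one s
  omega

section Shapes

variable (R : Type*) [CommRing R]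

def psiOddShape (e : ℕ) (u v r : R) : R × R × R :=
  (u ^ (2 * e - 1) * v ^ e, -(u ^ (2 * e) * v ^ (e - 1)), r * (u ^ (4 * e - 2) * v ^ (2 * e - 2)))

def psiEvenShape (e : ℕ) (u v r : R) : R × R × R :=
  (-(u ^ (2 * e + 1) * v ^ e), -(u ^ (2 * e) * v ^ (e + 1)), r * (u ^ (4 * e) * v ^ (2 * e)))

variable {R}

theorem Psi_psiEvenShape (e : ℕ) (u v r : R) :
    Psi R (psiEvenShape R e u v r) = psiOddShape R (2 * e + 1) u v r := by
  simp only [Psi, psiEvenShape, psiOddShape, show 2 * (2 * e + 1) - 1 = 4 * e + 1 by omega,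
    show 2 * e + 1 - 1 = 2 * e by omega, show 4 * (2 * e + 1) - 2 = 8 * e + 2 by omega,
    show 2 * (2 * e + 1) - 2 = 4 * e by omega]
  ext <;> ring

theorem Psi_psiOddShape_succ (e : ℕ) (u v r : R) :
    Psi R (psiOddShape R (e + 1) u v r) = psiEvenShape R (2 * e + 1) u v r := by
  simp only [Psi, psiEvenShape, psiOddShape, show 2 * (e + 1) - 1 = 2 * e + 1 by omega,
    Nat.add_sub_cancel, show 4 * (e + 1) - 2 = 4 * e + 2 by omega,
    show 2 * (e + 1) - 2 = 2 * e by omega]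
  ext <;> ring

theorem Psi_iterate_two_mul_add_one (s : ℕ) (u v r : R) :
    (Psi R)^[2 * s + 1] (u, v, r) = psiOddShape R (eSeq (2 * s + 1)) u v r := by
  induction s with
  | zero => simp [Psi, psiOddShape, eSeq]
  | succ s ih =>
    rw [eSeq_two_mul_add_one (s + 1), mul_add_one 2 s, eSeq_two_mul_add_two,
      Function.iterate_succ_apply', Function.iterate_succ_apply', ih, eSeq_two_mul_add_one,
      Psi_psiOddShape_succ, Psi_psiEvenShape]

theorem Psi_iterate_two_mul_add_two (s : ℕ) (u v r : R) :
    (Psi R)^[2 * s + 2] (u, v, r) = psiEvenShape R (eSeq (2 * s + 2)) u v r := by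
  rw [Function.iterate_succ_apply', Psi_iterate_two_mul_add_one, eSeq_two_mul_add_one,
    Psi_psiOddShape_succ, eSeq_two_mul_add_two]

end Shapes

/-- Equation (18): the explicit formula for the iterates of the map
`Ψ(u, v, r) = (uv, -u², ru²)`.  Writing `z_t = (u²v)^{e_t}`, one has
`Ψ^t(u, v, r) = (z_t/u, -z_t/v, r(z_t/(uv))²)` for odd `t ≥ 1` and
`Ψ^t(u, v, r) = (-u z_t, -v z_t, r z_t²)` for even `t ≥ 1`, here expressed without
division. -/
theorem Psi_iterate_formula (R : Type*) [CommRing R] (u v r : R) (t : ℕ) (ht : 1 ≤ t) :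
    (Odd t → (Psi R)^[t] (u, v, r) =
      (u ^ (2 * eSeq t - 1) * v ^ eSeq t,
       -(u ^ (2 * eSeq t) * v ^ (eSeq t - 1)),
       r * (u ^ (4 * eSeq t - 2) * v ^ (2 * eSeq t - 2)))) ∧
    (Even t → (Psi R)^[t] (u, v, r) =
      (-(u ^ (2 * eSeq t + 1) * v ^ eSeq t),
       -(u ^ (2 * eSeq t) * v ^ (eSeq t + 1)),
       r * (u ^ (4 * eSeq t) * v ^ (2 * eSeq t)))) := by
  constructor
  · rintro ⟨s, rfl⟩
    exact Psi_iterate_two_mul_add_one s u v r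
  · rintro ⟨s, rfl⟩
    obtain ⟨k, rfl⟩ : ∃ k, s = k + 1 := ⟨s - 1, by omega⟩
    rw [show k + 1 + (k + 1) = 2 * k + 2 by ring]
    exact Psi_iterate_two_mul_add_two k u v r
end

section
/- Let K be a field and let g ∈ K[x] be monic, irreducible and nonconstant. Suppose that g(x + b) = g(x) as polynomials for some b ∈ K with b ≠ 0. Then K has positive characteristic p (a prime), and p divides the degree of g. -/
/-!
The coefficient of `X ^ (n - 1)` in `g (X + b)` is that of `g` plus `n * b`, where `n` is the
degree of the monic `g`. A shift fixing `g` therefore forces `n * b = 0`, so `n = 0` in `K`.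
-/

open Polynomial

namespace Polynomial

variable {R : Type*} [Semiring R]

theorem coeff_taylor_natDegree_sub_one (f : R[X]) (r : R) :
    (taylor r f).coeff (f.natDegree - 1) =
      f.coeff (f.natDegree - 1) + f.natDegree * f.leadingCoeff * r := by
  set n := f.natDegree
  have hdeg : (hasseDeriv (n - 1) f).natDegree < 2 := by
    have := natDegree_hasseDeriv_le f (n - 1)
    omega
  rw [taylor_coeff, eval_eq_sum_range' hdeg, Finset.sum_range_succ, Finset.sum_range_one,
    hasseDeriv_coeff, hasseDeriv_coeff]
  rcases Nat.eq_zero_or_pos n with hn | hn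
  · have hcoeff_one : f.coeff 1 = 0 := coeff_eq_zero_of_natDegree_lt (by omega)
    simp [hn, hcoeff_one]
  · rw [Nat.add_sub_cancel' hn, Nat.choose_symm hn, Nat.choose_one_right]
    simp only [zero_add, Nat.choose_self, Nat.cast_one, one_mul, pow_zero, mul_one, pow_one]
    rfl

end Polynomial

theorem CharP.exists_prime_dvd_of_natCast_eq_zero (R : Type*) [Semiring R] [NoZeroDivisors R]
    [Nontrivial R] {n : ℕ} (hn : n ≠ 0) (h : (n : R) = 0) :
    ∃ p : ℕ, p.Prime ∧ CharP R p ∧ p ∣ n := by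
  have hdvd : ringChar R ∣ n := ringChar.dvd h
  refine ⟨ringChar R, CharP.char_prime_of_ne_zero R ?_, ringChar.charP R, hdvd⟩
  rintro h0
  exact hn (Nat.eq_zero_of_zero_dvd (h0 ▸ hdvd))

theorem shift_fixed_char_dvd_degree_general (K : Type*) [Field K] (g : K[X])
    (hg_monic : g.Monic) (hg_deg : 0 < g.natDegree)
    (b : K) (hb : b ≠ 0) (hshift : g.comp (X + C b) = g) :
    ∃ p : ℕ, p.Prime ∧ CharP K p ∧ p ∣ g.natDegree := by
  have hcoeff := coeff_taylor_natDegree_sub_one g b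
  rw [taylor_apply, hshift, hg_monic.leadingCoeff, mul_one, left_eq_add, mul_eq_zero] at hcoeff
  exact CharP.exists_prime_dvd_of_natCast_eq_zero K hg_deg.ne' (hcoeff.resolve_right hb)

/-- Lemma 5.2: if a monic irreducible nonconstant polynomial `g` over a field `K` is
fixed by a nontrivial shift, `g(x + b) = g(x)` with `b ≠ 0`, then `K` has positive
prime characteristic `p` and `p` divides the degree of `g`. -/
theorem shift_fixed_char_dvd_degree (K : Type*) [Field K] (g : K[X])
    (hg_monic : g.Monic) (hg_irr : Irreducible g) (hg_deg : 0 < g.natDegree)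
    (b : K) (hb : b ≠ 0) (hshift : g.comp (X + C b) = g) :
    ∃ p : ℕ, p.Prime ∧ CharP K p ∧ p ∣ g.natDegree :=
  shift_fixed_char_dvd_degree_general K g hg_monic hg_deg b hb hshift
end

section
/- Let q be an odd prime power and let F_q be the finite field with q elements, with algebraic closure F̄_q. Then: (1) the number of unordered pairs {f, g} of distinct monic irreducible quadratic polynomials over F_q with f ▷ g = g and g ▷ f = f (type I stable 2-sets) equals (q − 1)/4 if q ≡ 1 (mod 4) and (q − 3)/4 if q ≡ 3 (mod 4); (2) there are no pairs with f ▷ g = f and g ▷ f = g (type II); and (3) the number of unordered pairs {f, g} of distinct monic irreducible quadratics over F_q with f ▷ g = g and g ▷ f = g (type III stable 2-sets) equals q − 1. -/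
open Polynomial

/-- `f` is a monic irreducible quadratic. -/
def IsQuad {F : Type*} [Field F] (f : F[X]) : Prop :=
  f.Monic ∧ Irreducible f ∧ f.natDegree = 2

/-- `WedgeEq f g h` expresses `f ▷ g = h`: for every root `α` of `g` in the algebraic
closure, the minimal polynomial of `f(α)` equals `h`. -/
def WedgeEq {F : Type*} [Field F] (f g h : F[X]) : Prop :=
  ∀ α : AlgebraicClosure F, Polynomial.aeval α g = 0 →
    minpoly F (Polynomial.aeval α f) = h

/-!
In odd characteristic every monic irreducible quadratic is `(X - a)² - d` with `d` a nonsquare.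
If `r² = e`, then `(X - a)² - d` takes the value `((b - a)² + e - d) + 2(b - a) r` at the root
`b + r` of `(X - b)² - e`, so its minimal polynomial is
`(X - ((b - a)² + e - d))² - 4(b - a)² e`. Hence each wedge relation between two such
quadratics is a pair of polynomial equations in `a, b, d, e`. For types I and III these force
`b - a = ±1/2`: the type I sets are `{X² - d, (X - 1/2)² - (d + 1/4)}` with `d` and `d + 1/4`
nonsquares, and the type III sets are `{(X - 1/4 ∓ 1/2)² - d, (X - 1/4)² - d}` with `d` a
nonsquare. For type II they force `4(b - a)² = -1` and then make `e` a square. The counts come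
from sums of the quadratic character `χ`, the type I count through the Jacobi sum
`J(χ, χ) = -χ(-1)`.
-/

section Quadratic

variable {F : Type*} [Field F]

noncomputable def sqPoly (a d : F) : F[X] := (X - C a) ^ 2 - C d

lemma aeval_sqPoly {A : Type*} [CommRing A] [Algebra F A] (a d : F) (x : A) :
    aeval x (sqPoly a d) = (x - algebraMap F A a) ^ 2 - algebraMap F A d := by
  simp [sqPoly]

lemma sqPoly_monic (a d : F) : (sqPoly a d).Monic := by
  unfold sqPoly; monicity!

lemma natDegree_sqPoly (a d : F) : (sqPoly a d).natDegree = 2 := by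
  unfold sqPoly; compute_degree!

lemma sqPoly_eq_X_sq_add (a d : F) : sqPoly a d = X ^ 2 + C (-2 * a) * X + C (a ^ 2 - d) := by
  simp only [sqPoly, C_mul, C_sub, C_neg, C_pow, C_ofNat]
  ring

lemma coeff_sqPoly_one (a d : F) : (sqPoly a d).coeff 1 = -2 * a := by
  rw [sqPoly_eq_X_sq_add, coeff_add, coeff_add, coeff_C_mul_X, coeff_C, coeff_X_pow]
  simp

lemma coeff_sqPoly_zero (a d : F) : (sqPoly a d).coeff 0 = a ^ 2 - d := by
  rw [sqPoly_eq_X_sq_add, coeff_add, coeff_add, coeff_C_mul_X, coeff_C, coeff_X_pow]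
  simp

lemma sqPoly_inj {a d a' d' : F} (h2 : (2 : F) ≠ 0) :
    sqPoly a d = sqPoly a' d' ↔ a = a' ∧ d = d' := by
  refine ⟨fun h => ?_, fun ⟨ha, hd⟩ => ha ▸ hd ▸ rfl⟩
  have h1 := congrArg (coeff · 1) h
  have h0 := congrArg (coeff · 0) h
  simp only [coeff_sqPoly_one, coeff_sqPoly_zero] at h1 h0
  obtain rfl : a = a' := by simpa [h2] using h1
  exact ⟨rfl, by linear_combination -h0⟩

lemma isRoot_sqPoly_iff {a d x : F} : (sqPoly a d).IsRoot x ↔ (x - a) ^ 2 = d := by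
  simp [sqPoly, sub_eq_zero]

lemma isQuad_sqPoly_iff {a d : F} : IsQuad (sqPoly a d) ↔ ¬ IsSquare d := by
  have hdeg := natDegree_sqPoly a d
  rw [IsQuad, irreducible_iff_roots_eq_zero_of_degree_le_three (by omega) (by omega),
    Multiset.eq_zero_iff_forall_notMem]
  simp only [sqPoly_monic, hdeg, mem_roots (sqPoly_monic a d).ne_zero, isRoot_sqPoly_iff,
    true_and, and_true]
  constructor
  · rintro h ⟨r, rfl⟩
    exact h (a + r) (by ring)
  · rintro h x rfl
    exact h ⟨x - a, sq _⟩

lemma IsQuad.exists_eq_sqPoly {f : F[X]} (h2 : (2 : F) ≠ 0) (hf : IsQuad f) :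
    ∃ a d, ¬ IsSquare d ∧ f = sqPoly a d := by
  set a := -f.coeff 1 / 2
  have hf_eq : f = sqPoly a (a ^ 2 - f.coeff 0) := by
    conv_lhs => rw [hf.1.as_sum, hf.2.2]
    rw [sqPoly_eq_X_sq_add, sub_sub_cancel, show -2 * a = f.coeff 1 by simp only [a]; field_simp]
    simp only [Finset.sum_range_succ, Finset.sum_range_zero, pow_zero, pow_one, mul_one,
      zero_add]
    ring
  exact ⟨a, _, isQuad_sqPoly_iff.1 (hf_eq ▸ hf), hf_eq⟩

end Quadratic

section Wedge

variable {F : Type*} [Field F]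

lemma minpoly_add_mul_sqrt {K : Type*} [Field K] [Algebra F K] {e : F} (he : ¬ IsSquare e)
    {r : K} (hr : r ^ 2 = algebraMap F K e) (u : F) {v : F} (hv : v ≠ 0) :
    minpoly F (algebraMap F K u + algebraMap F K v * r) = sqPoly u (v ^ 2 * e) := by
  have hve : ¬ IsSquare (v ^ 2 * e) := fun h => he <| by
    simpa [hv] using h.div (IsSquare.sq v)
  refine (minpoly.eq_of_irreducible_of_monic (isQuad_sqPoly_iff.2 hve).2.1 ?_
    (sqPoly_monic _ _)).symm
  rw [aeval_sqPoly, map_mul, map_pow, ← hr]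
  ring

lemma aeval_sqPoly_add_sqrt {K : Type*} [CommRing K] [Algebra F K] (a d b : F) {e : F} {r : K}
    (hr : r ^ 2 = algebraMap F K e) :
    aeval (algebraMap F K b + r) (sqPoly a d) =
      algebraMap F K ((b - a) ^ 2 + e - d) + algebraMap F K (2 * (b - a)) * r := by
  simp only [aeval_sqPoly, map_add, map_sub, map_mul, map_pow, map_ofNat]
  linear_combination hr

lemma wedgeEq_sqPoly_iff (h2 : (2 : F) ≠ 0) {a d b e c m : F} (he : ¬ IsSquare e) :
    WedgeEq (sqPoly a d) (sqPoly b e) (sqPoly c m) ↔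
      a ≠ b ∧ c = (b - a) ^ 2 + e - d ∧ m = 4 * (b - a) ^ 2 * e := by
  have hmin : ∀ r : AlgebraicClosure F, r ^ 2 = algebraMap F _ e → a ≠ b →
      minpoly F (aeval (algebraMap F _ b + r) (sqPoly a d)) =
        sqPoly ((b - a) ^ 2 + e - d) (4 * (b - a) ^ 2 * e) := by
    intro r hr hab
    rw [aeval_sqPoly_add_sqrt a d b hr,
      minpoly_add_mul_sqrt he hr _ (mul_ne_zero h2 (sub_ne_zero.2 hab.symm)), mul_pow]
    norm_num
  constructor
  · intro hW
    obtain ⟨r, hr⟩ :=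
      IsAlgClosed.exists_pow_nat_eq (algebraMap F (AlgebraicClosure F) e) two_pos
    have hroot : aeval (algebraMap F _ b + r) (sqPoly b e) = 0 := by
      rw [aeval_sqPoly, add_sub_cancel_left, hr, sub_self]
    have hab : a ≠ b := by
      rintro rfl
      have hdeg := congrArg natDegree (hW _ hroot)
      rw [aeval_sqPoly_add_sqrt a d a hr, sub_self, mul_zero, map_zero, zero_mul, add_zero,
        minpoly.eq_X_sub_C, natDegree_X_sub_C, natDegree_sqPoly] at hdeg
      exact absurd hdeg (by norm_num)
    have hW' := hW _ hroot
    rw [hmin r hr hab, sqPoly_inj h2] at hW'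
    exact ⟨hab, hW'.1.symm, hW'.2.symm⟩
  · rintro ⟨hab, rfl, rfl⟩ α hα
    have hr : (α - algebraMap F _ b) ^ 2 = algebraMap F _ e := by
      rwa [aeval_sqPoly, sub_eq_zero] at hα
    simpa using hmin _ hr hab

end Wedge

section StableSets

variable {F : Type*} [Field F]

lemma ne_zero_of_not_isSquare {d : F} (hd : ¬ IsSquare d) : d ≠ 0 :=
  fun h => hd (h ▸ IsSquare.zero)

lemma four_ne_zero_of_two_ne_zero (h2 : (2 : F) ≠ 0) : (4 : F) ≠ 0 := by
  rw [show (4 : F) = 2 * 2 by norm_num]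
  exact mul_ne_zero h2 h2

lemma wedgeEq_typeI_iff (h2 : (2 : F) ≠ 0) {a d b e : F} (hd : ¬ IsSquare d)
    (he : ¬ IsSquare e) :
    WedgeEq (sqPoly a d) (sqPoly b e) (sqPoly b e) ∧
        WedgeEq (sqPoly b e) (sqPoly a d) (sqPoly a d) ↔
      (a = 0 ∧ b = 2⁻¹ ∧ e = d + 4⁻¹) ∨ (b = 0 ∧ a = 2⁻¹ ∧ d = e + 4⁻¹) := by
  have h4 := four_ne_zero_of_two_ne_zero h2
  rw [wedgeEq_sqPoly_iff h2 he, wedgeEq_sqPoly_iff h2 hd]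
  constructor
  · rintro ⟨⟨-, hb, he'⟩, -, ha, -⟩
    have ht : 4 * (b - a) ^ 2 = 1 :=
      mul_right_cancel₀ (ne_zero_of_not_isSquare he) (by linear_combination -he')
    have hsum : 2 * (a + b) = 1 := by linear_combination 2 * hb + 2 * ha + ht
    have hdiff : b - a = 2 * (e - d) := by linear_combination hb - ha
    rcases mul_eq_zero.1 (show (2 * (b - a) - 1) * (2 * (b - a) + 1) = 0 by
      linear_combination ht) with ht' | ht'
    · refine .inl ⟨mul_left_cancel₀ h4 (by linear_combination hsum - ht'), ?_, ?_⟩ <;>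
        field_simp
      · exact mul_left_cancel₀ h2 (by linear_combination hsum + ht')
      · linear_combination ht' - 2 * hdiff
    · refine .inr ⟨mul_left_cancel₀ h4 (by linear_combination hsum + ht'), ?_, ?_⟩ <;>
        field_simp
      · exact mul_left_cancel₀ h2 (by linear_combination hsum - ht')
      · linear_combination -ht' + 2 * hdiff
  · rintro (⟨rfl, rfl, rfl⟩ | ⟨rfl, rfl, rfl⟩)
    · refine ⟨⟨(inv_ne_zero h2).symm, ?_, ?_⟩, inv_ne_zero h2, ?_, ?_⟩ <;>
        field_simp <;> ring
    · refine ⟨⟨inv_ne_zero h2, ?_, ?_⟩, (inv_ne_zero h2).symm, ?_, ?_⟩ <;>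
        field_simp <;> ring

lemma wedgeEq_typeIII_iff (h2 : (2 : F) ≠ 0) {a d b e : F} (hd : ¬ IsSquare d)
    (he : ¬ IsSquare e) :
    WedgeEq (sqPoly a d) (sqPoly b e) (sqPoly b e) ∧
        WedgeEq (sqPoly b e) (sqPoly a d) (sqPoly b e) ↔
      (b - a = 2⁻¹ ∨ b - a = -2⁻¹) ∧ b = 4⁻¹ ∧ e = d := by
  have h4 := four_ne_zero_of_two_ne_zero h2
  rw [wedgeEq_sqPoly_iff h2 he, wedgeEq_sqPoly_iff h2 hd]
  constructor
  · rintro ⟨⟨-, hb, he'⟩, -, hb', -⟩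
    have ht : 4 * (b - a) ^ 2 = 1 :=
      mul_right_cancel₀ (ne_zero_of_not_isSquare he) (by linear_combination -he')
    have hed : e = d := mul_left_cancel₀ h2 (by linear_combination hb' - hb)
    refine ⟨?_, by field_simp; linear_combination 4 * hb + ht + 4 * hed, hed⟩
    rcases mul_eq_zero.1 (show (2 * (b - a) - 1) * (2 * (b - a) + 1) = 0 by
      linear_combination ht) with ht' | ht'
    · exact .inl (by field_simp; linear_combination ht')
    · exact .inr (by field_simp; linear_combination ht')
  · rintro ⟨ht, hb, rfl⟩
    have ht4 : 4 * (b - a) ^ 2 = 1 := by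
      rcases ht with ht | ht <;> rw [ht] <;> field_simp <;> norm_num
    have hb4 : 4 * b = 1 := by rw [hb]; field_simp
    have hab : a ≠ b := by
      rintro rfl
      simp at ht4
    refine ⟨⟨hab, ?_, ?_⟩, hab.symm, ?_, ?_⟩
    · exact mul_left_cancel₀ h4 (by linear_combination hb4 - ht4)
    · linear_combination -e * ht4
    · exact mul_left_cancel₀ h4 (by linear_combination hb4 - ht4)
    · linear_combination -e * ht4

lemma not_wedgeEq_typeII (h2 : (2 : F) ≠ 0) {a d b e : F} (hd : ¬ IsSquare d)
    (he : ¬ IsSquare e) :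
    ¬ (WedgeEq (sqPoly a d) (sqPoly b e) (sqPoly a d) ∧
        WedgeEq (sqPoly b e) (sqPoly a d) (sqPoly b e)) := by
  rw [wedgeEq_sqPoly_iff h2 he, wedgeEq_sqPoly_iff h2 hd]
  rintro ⟨⟨hab, ha, hd'⟩, -, hb, he'⟩
  have ht : b - a = 2 * (d - e) := by linear_combination hb - ha
  have hde : d - e ≠ 0 := fun h => hab (by linear_combination -ht - 2 * h)
  have ht4 : 4 * (b - a) ^ 2 = -1 := mul_left_cancel₀ hde (by linear_combination hd' - he')
  have htm : b - a = -4 * e := by linear_combination ht + 2 * (hd' + e * ht4)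
  have h64 : 64 * e ^ 2 = -1 := by linear_combination ht4 - 4 * (b - a - 4 * e) * htm
  have h4 := four_ne_zero_of_two_ne_zero h2
  -- `((1 + 8e) / 4)² = (1 + 16e + 64e²) / 16 = e`
  exact he ⟨(1 + 8 * e) / 4, by field_simp; linear_combination -h64⟩

lemma eq_of_pair_eq_pair {α : Type*} {x y x' y' : α} (h : ({x, y} : Set α) = {x', y'})
    (hne : x ≠ y') : x = x' := by
  rcases Set.pair_eq_pair_iff.1 h with h | h
  exacts [h.1, absurd h.1 hne]

lemma typeI_pairs_eq (h2 : (2 : F) ≠ 0) :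
    {S : Set F[X] | ∃ f g : F[X], f ≠ g ∧ IsQuad f ∧ IsQuad g ∧ S = {f, g} ∧
        WedgeEq f g g ∧ WedgeEq g f f} =
      (fun d => ({sqPoly 0 d, sqPoly 2⁻¹ (d + 4⁻¹)} : Set F[X])) ''
        {d | ¬ IsSquare d ∧ ¬ IsSquare (d + 4⁻¹)} := by
  ext S
  constructor
  · rintro ⟨f, g, -, hf, hg, rfl, hfg, hgf⟩
    obtain ⟨a, d, hd, rfl⟩ := hf.exists_eq_sqPoly h2
    obtain ⟨b, e, he, rfl⟩ := hg.exists_eq_sqPoly h2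
    rcases (wedgeEq_typeI_iff h2 hd he).1 ⟨hfg, hgf⟩ with
      ⟨rfl, rfl, rfl⟩ | ⟨rfl, rfl, rfl⟩
    · exact ⟨d, ⟨hd, he⟩, rfl⟩
    · exact ⟨e, ⟨he, hd⟩, Set.pair_comm _ _⟩
  · rintro ⟨d, ⟨hd, hd'⟩, rfl⟩
    refine ⟨_, _, ?_, isQuad_sqPoly_iff.2 hd, isQuad_sqPoly_iff.2 hd', rfl,
      (wedgeEq_typeI_iff h2 hd hd').2 (.inl ⟨rfl, rfl, rfl⟩)⟩
    rw [Ne, sqPoly_inj h2]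
    exact fun h => inv_ne_zero h2 h.1.symm

lemma typeI_pair_injective (h2 : (2 : F) ≠ 0) :
    Function.Injective (fun d : F => ({sqPoly 0 d, sqPoly 2⁻¹ (d + 4⁻¹)} : Set F[X])) := by
  intro d d' h
  have hne : sqPoly 0 d ≠ sqPoly 2⁻¹ (d' + 4⁻¹) := fun h' =>
    inv_ne_zero h2 ((sqPoly_inj h2).1 h').1.symm
  exact ((sqPoly_inj h2).1 (eq_of_pair_eq_pair h hne)).2

lemma typeIII_pairs_eq (h2 : (2 : F) ≠ 0) :
    {S : Set F[X] | ∃ f g : F[X], f ≠ g ∧ IsQuad f ∧ IsQuad g ∧ S = {f, g} ∧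
        WedgeEq f g g ∧ WedgeEq g f g} =
      (fun p : F × F => ({sqPoly (4⁻¹ - p.1) p.2, sqPoly 4⁻¹ p.2} : Set F[X])) ''
        ({2⁻¹, -2⁻¹} ×ˢ {d | ¬ IsSquare d}) := by
  ext S
  constructor
  · rintro ⟨f, g, -, hf, hg, rfl, hfg, hgf⟩
    obtain ⟨a, d, hd, rfl⟩ := hf.exists_eq_sqPoly h2
    obtain ⟨b, e, he, rfl⟩ := hg.exists_eq_sqPoly h2
    obtain ⟨ht, rfl, rfl⟩ := (wedgeEq_typeIII_iff h2 hd he).1 ⟨hfg, hgf⟩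
    exact ⟨(4⁻¹ - a, e), ⟨ht, he⟩, by simp only [sub_sub_cancel]⟩
  · rintro ⟨⟨t, d⟩, ⟨ht, hd⟩, rfl⟩
    have ht0 : t ≠ 0 := by rcases ht with rfl | rfl <;> simp [h2]
    refine ⟨_, _, ?_, isQuad_sqPoly_iff.2 hd, isQuad_sqPoly_iff.2 hd, rfl,
      (wedgeEq_typeIII_iff h2 hd hd).2 ⟨(sub_sub_cancel _ t).symm ▸ ht, rfl, rfl⟩⟩
    rw [Ne, sqPoly_inj h2]
    exact fun h => ht0 (by linear_combination -h.1)

lemma typeIII_pair_injOn (h2 : (2 : F) ≠ 0) :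
    Set.InjOn (fun p : F × F => ({sqPoly (4⁻¹ - p.1) p.2, sqPoly 4⁻¹ p.2} : Set F[X]))
      ({2⁻¹, -2⁻¹} ×ˢ {d | ¬ IsSquare d}) := by
  rintro ⟨t, d⟩ ⟨ht, -⟩ ⟨t', d'⟩ - h
  have ht0 : t ≠ 0 := by rcases ht with rfl | rfl <;> simp [h2]
  have hne : sqPoly (4⁻¹ - t) d ≠ sqPoly 4⁻¹ d' := fun h' =>
    ht0 (by linear_combination -((sqPoly_inj h2).1 h').1)
  obtain ⟨htt, hdd⟩ := (sqPoly_inj h2).1 (eq_of_pair_eq_pair h hne)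
  exact Prod.ext (sub_right_inj.1 htt) hdd

end StableSets

section Counting

variable {F : Type*} [Field F] [Fintype F] [DecidableEq F]

lemma sum_quadraticChar_mul_quadraticChar_add (hF : ringChar F ≠ 2) {c : F} (hc : c ≠ 0) :
    ∑ x : F, quadraticChar F x * quadraticChar F (x + c) = -1 := by
  set χ := quadraticChar F
  have hJ : jacobiSum χ χ = -χ (-1) := by
    simpa only [(quadraticChar_isQuadratic F).inv] using
      jacobiSum_nontrivial_inv (quadraticChar_ne_one hF)
  calc ∑ x, χ x * χ (x + c) = ∑ y, χ (-c * y) * χ (-c * y + c) :=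
        (Fintype.sum_bijective _ (mulLeft_bijective₀ _ (neg_ne_zero.2 hc)) _ _
          fun _ => rfl).symm
    _ = χ (-1) * χ c ^ 2 * jacobiSum χ χ := by
        rw [jacobiSum, Finset.mul_sum]
        refine Finset.sum_congr rfl fun y _ => ?_
        rw [show -c * y + c = c * (1 - y) by ring, show -c * y = -1 * c * y by ring]
        simp only [map_mul]
        ring
    _ = -1 := by
        rw [hJ, quadraticChar_sq_one hc]
        linear_combination -quadraticChar_sq_one (neg_ne_zero.2 (one_ne_zero (α := F)))

lemma two_mul_ncard_nonsquare_add_one (hF : ringChar F ≠ 2) :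
    2 * {d : F | ¬ IsSquare d}.ncard + 1 = Fintype.card F := by
  classical
  have hpt : ∀ x : F, 1 - quadraticChar F x =
      2 * (if ¬ IsSquare x then 1 else 0) + (if x = 0 then 1 else 0) := by
    intro x
    by_cases hx : x = 0
    · simp [hx]
    · by_cases hsq : IsSquare x <;> simp [quadraticChar_apply, quadraticCharFun, hx, hsq]
  have hsum := Finset.sum_congr rfl fun x (_ : x ∈ Finset.univ) => hpt x
  rw [Finset.sum_sub_distrib, quadraticChar_sum_zero hF, Finset.sum_add_distrib,
    ← Finset.mul_sum, Finset.sum_boole, Finset.sum_ite_eq'] at hsum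
  rw [Set.ncard_eq_toFinset_card']
  simp at hsum ⊢
  omega

lemma four_mul_ncard_nonsquare_pair (hF : ringChar F ≠ 2) {c : F} (hc : c ≠ 0)
    (hcsq : IsSquare c) :
    4 * ({d : F | ¬ IsSquare d ∧ ¬ IsSquare (d + c)}.ncard : ℤ) =
      Fintype.card F - 2 + quadraticChar F (-1) := by
  classical
  set χ := quadraticChar F
  have hχc : χ c = 1 := (quadraticChar_one_iff_isSquare hc).2 hcsq
  have hpt : ∀ x : F, (1 - χ x) * (1 - χ (x + c)) =
      4 * (if ¬ IsSquare x ∧ ¬ IsSquare (x + c) then 1 else 0) +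
        (if x = -c then 1 - χ (-1) else 0) := by
    intro x
    by_cases hx : x = -c
    · rw [hx, neg_add_cancel, MulChar.map_zero, show -c = -1 * c by ring, map_mul, hχc]
      simp
    by_cases hx0 : x = 0
    · simp [hx0, hχc, hc]
    have hxc : x + c ≠ 0 := fun h => hx (eq_neg_of_add_eq_zero_left h)
    by_cases hsq : IsSquare x <;> by_cases hsq' : IsSquare (x + c) <;>
      simp [χ, quadraticChar_apply, quadraticCharFun, hx, hx0, hxc, hsq, hsq']
  have hshift : ∑ x, χ (x + c) = 0 :=
    (Fintype.sum_equiv (Equiv.addRight c) _ χ fun _ => rfl).trans (quadraticChar_sum_zero hF)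
  have hsum : ∑ x, (1 - χ x) * (1 - χ (x + c)) = Fintype.card F - 1 := by
    have hχ : ∑ x, χ x = 0 := quadraticChar_sum_zero hF
    have hJ : ∑ x, χ x * χ (x + c) = -1 := sum_quadraticChar_mul_quadraticChar_add hF hc
    simp only [sub_mul, one_mul, mul_sub, mul_one, Finset.sum_sub_distrib, hshift, hχ,
      Finset.sum_const, Finset.card_univ, nsmul_eq_mul, mul_one]
    simp [hJ]
  rw [Finset.sum_congr rfl fun x _ => hpt x, Finset.sum_add_distrib, ← Finset.mul_sum,
    Finset.sum_boole, Finset.sum_ite_eq'] at hsum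
  rw [Set.ncard_eq_toFinset_card']
  simp at hsum ⊢
  linarith

end Counting

/-- Theorem 5.4 (number of quadratic stable 2-sets over `F_q`, `q` odd):
(1) the number of unordered pairs `{f, g}` of distinct monic irreducible quadratics
with `f ▷ g = g` and `g ▷ f = f` (type I) is `(q-1)/4` if `q ≡ 1 (mod 4)` and
`(q-3)/4` if `q ≡ 3 (mod 4)`;
(2) there are no type II pairs (`f ▷ g = f` and `g ▷ f = g`);
(3) the number of unordered pairs with `f ▷ g = g` and `g ▷ f = g` (type III)
is `q - 1`. -/
theorem number_of_quadratic_stable_2sets (F : Type*) [Field F] [Fintype F]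
    (hodd : Odd (Fintype.card F)) :
    ((Fintype.card F % 4 = 1 →
      {S : Set F[X] | ∃ f g : F[X], f ≠ g ∧ IsQuad f ∧ IsQuad g ∧ S = {f, g} ∧
        WedgeEq f g g ∧ WedgeEq g f f}.ncard = (Fintype.card F - 1) / 4) ∧
     (Fintype.card F % 4 = 3 →
      {S : Set F[X] | ∃ f g : F[X], f ≠ g ∧ IsQuad f ∧ IsQuad g ∧ S = {f, g} ∧
        WedgeEq f g g ∧ WedgeEq g f f}.ncard = (Fintype.card F - 3) / 4)) ∧
    (¬ ∃ f g : F[X], f ≠ g ∧ IsQuad f ∧ IsQuad g ∧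
        WedgeEq f g f ∧ WedgeEq g f g) ∧
    ({S : Set F[X] | ∃ f g : F[X], f ≠ g ∧ IsQuad f ∧ IsQuad g ∧ S = {f, g} ∧
        WedgeEq f g g ∧ WedgeEq g f g}.ncard = Fintype.card F - 1) := by
  classical
  have hF : ringChar F ≠ 2 := by
    rwa [Ne, FiniteField.even_card_iff_char_two, ← Nat.even_iff, Nat.not_even_iff_odd]
  have h2 : (2 : F) ≠ 0 := Ring.two_ne_zero hF
  refine ⟨?_, fun ⟨f, g, _, hf, hg, hfg, hgf⟩ => ?_, ?_⟩
  · have hN := four_mul_ncard_nonsquare_pair hF (inv_ne_zero (four_ne_zero_of_two_ne_zero h2))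
      (isSquare_inv.2 ⟨2, by norm_num⟩)
    rw [typeI_pairs_eq h2, Set.ncard_image_of_injective _ (typeI_pair_injective h2)]
    constructor <;> intro hq
    · rw [(quadraticChar_one_iff_isSquare (neg_ne_zero.2 one_ne_zero)).2
        (FiniteField.isSquare_neg_one_iff.2 (by omega))] at hN
      omega
    · rw [quadraticChar_neg_one_iff_not_isSquare.2
        (by rw [FiniteField.isSquare_neg_one_iff]; omega)] at hN
      omega
  · obtain ⟨a, d, hd, rfl⟩ := hf.exists_eq_sqPoly h2
    obtain ⟨b, e, he, rfl⟩ := hg.exists_eq_sqPoly h2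
    exact not_wedgeEq_typeII h2 hd he ⟨hfg, hgf⟩
  · have hpm : (2 : F)⁻¹ ≠ -2⁻¹ := fun h =>
      inv_ne_zero h2 ((Ring.eq_self_iff_eq_zero_of_char_ne_two hF).1 h.symm)
    rw [typeIII_pairs_eq h2, (typeIII_pair_injOn h2).ncard_image, Set.ncard_prod,
      Set.ncard_pair hpm]
    have := two_mul_ncard_nonsquare_add_one hF
    omega
end
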